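/- arXiv:2202.02092 — 4 statements merged into one kernel-verified Lean document; each statement's English description precedes it below -/
import Mathlib

section
/- Let A and B be finite sets, R ⊆ A × B a relation, and P, P' probability measures on A and B respectively. Then there exists a coupling Q of P and P' (a probability measure on A × B with marginals P and P') with Q(R) = 1 if and only if P(U) ≤ P'(N_R(U)) for all U ⊆ A, where N_R(U) = {y ∈ B : ∃ x ∈ U, (x,y) ∈ R}. -/
open Finset
open scoped Classical
set_option linter.unusedSectionVars false

section Strassen

variable {A B : Type*} [Fintype A] [Fintype B]

/-- The neighborhood of `U` under relation `R`. -/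
noncomputable def NBR (R : A → B → Prop) (U : Finset A) : Finset B :=
  Finset.univ.filter (fun b => ∃ a ∈ U, R a b)

lemma NBR_mono (R : A → B → Prop) {U V : Finset A} (h : U ⊆ V) : NBR R U ⊆ NBR R V := by
  intro b hb
  simp only [NBR, mem_filter, mem_univ, true_and] at *
  obtain ⟨a, ha, hr⟩ := hb
  exact ⟨a, h ha, hr⟩

/-- Existence of a coupling supported on `R`. -/
def Sol (R : A → B → Prop) (P : A → ℝ) (P' : B → ℝ) : Prop :=
  ∃ Q : A × B → ℝ, (∀ p, 0 ≤ Q p) ∧ (∀ a, ∑ b, Q (a, b) = P a) ∧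
    (∀ b, ∑ a, Q (a, b) = P' b) ∧ ∀ a b, ¬ R a b → Q (a, b) = 0

/-- Hypotheses: nonnegative, equal mass, Hall condition. -/
def Good (R : A → B → Prop) (P : A → ℝ) (P' : B → ℝ) : Prop :=
  (∀ a, 0 ≤ P a) ∧ (∀ b, 0 ≤ P' b) ∧ (∑ a, P a = ∑ b, P' b) ∧
    ∀ U : Finset A, ∑ a ∈ U, P a ≤ ∑ b ∈ NBR R U, P' b

noncomputable def suppF (P : A → ℝ) : Finset A := Finset.univ.filter (fun a => P a ≠ 0)

noncomputable def muF (P : A → ℝ) (P' : B → ℝ) : ℕ := (suppF P).card + (suppF P').card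

lemma exists_ne_zero_of_sum_pos {U : Finset A} {f : A → ℝ} (h : 0 < ∑ a ∈ U, f a) :
    ∃ a ∈ U, f a ≠ 0 := by
  by_contra hc
  push_neg at hc
  rw [Finset.sum_eq_zero hc] at h
  exact lt_irrefl 0 h

lemma sum_update_sub (f : A → ℝ) (a0 : A) (ε : ℝ) (U : Finset A) :
    ∑ a ∈ U, Function.update f a0 (f a0 - ε) a
      = (∑ a ∈ U, f a) - (if a0 ∈ U then ε else 0) := by
  by_cases h : a0 ∈ U
  · rw [Finset.sum_update_of_mem h, if_pos h]
    have : ∑ x ∈ U \ {a0}, f x = (∑ a ∈ U, f a) - f a0 := by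
      rw [Finset.sum_sdiff_eq_sub (by simpa using h)]
      simp
    rw [this]; ring
  · rw [if_neg h, sub_zero]
    apply Finset.sum_congr rfl
    intro a ha
    exact Function.update_of_ne (by rintro rfl; exact h ha) _ _

lemma suppF_card_lt {P P1 : A → ℝ} {a : A}
    (h1 : ∀ x, P1 x ≠ 0 → P x ≠ 0) (h2 : P1 a = 0) (h3 : P a ≠ 0) :
    (suppF P1).card < (suppF P).card := by
  have hsub : suppF P1 ⊆ (suppF P).erase a := by
    intro x hx
    simp only [suppF, mem_filter, mem_univ, true_and] at hx
    refine Finset.mem_erase.2 ⟨?_, by simp [suppF, h1 x hx]⟩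
    rintro rfl; exact hx h2
  have hmem : a ∈ suppF P := by simp [suppF, h3]
  exact lt_of_le_of_lt (Finset.card_le_card hsub)
    (Finset.card_lt_card (Finset.erase_ssubset hmem))

lemma suppF_card_le {P P1 : A → ℝ} (h1 : ∀ x, P1 x ≠ 0 → P x ≠ 0) :
    (suppF P1).card ≤ (suppF P).card := by
  apply Finset.card_le_card
  intro x hx
  simp only [suppF, mem_filter, mem_univ, true_and] at *
  exact h1 x hx

lemma sol_zero (R : A → B → Prop) {P : A → ℝ} {P' : B → ℝ}
    (hP : ∀ a, P a = 0) (hP' : ∀ b, P' b = 0) : Sol R P P' := by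
  refine ⟨fun _ => 0, fun _ => le_refl 0, ?_, ?_, fun _ _ _ => rfl⟩
  · intro a; rw [Finset.sum_const_zero, hP]
  · intro b; rw [Finset.sum_const_zero, hP']

lemma add_atom (R : A → B → Prop) (P : A → ℝ) (P' : B → ℝ) (a0 : A) (b0 : B)
    (ε : ℝ) (hε : 0 ≤ ε) (hR : R a0 b0)
    (hs : Sol R (Function.update P a0 (P a0 - ε)) (Function.update P' b0 (P' b0 - ε))) :
    Sol R P P' := by
  obtain ⟨Q, hQ0, hQr, hQc, hQs⟩ := hs
  refine ⟨fun p => Q p + (if p = (a0, b0) then ε else 0), ?_, ?_, ?_, ?_⟩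
  · intro p
    by_cases h : p = (a0, b0) <;> simp [h]
    · linarith [hQ0 ((a0, b0) : A × B)]
    · exact hQ0 p
  · intro a
    rw [Finset.sum_add_distrib, hQr a]
    by_cases h : a = a0
    · have he : ∑ b, (if ((a : A), b) = (a0, b0) then ε else 0) = ε := by
        simp [Prod.ext_iff, h]
      rw [he, h, Function.update_self]; ring
    · have he : ∑ b, (if ((a : A), b) = (a0, b0) then ε else 0) = 0 :=
        Finset.sum_eq_zero (fun b _ => by simp [Prod.ext_iff, h])
      rw [he, Function.update_of_ne h]; ring
  · intro b
    rw [Finset.sum_add_distrib, hQc b]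
    by_cases h : b = b0
    · have he : ∑ a, (if ((a : A), b) = (a0, b0) then ε else 0) = ε := by
        simp [Prod.ext_iff, h]
      rw [he, h, Function.update_self]; ring
    · have he : ∑ a, (if ((a : A), b) = (a0, b0) then ε else 0) = 0 :=
        Finset.sum_eq_zero (fun a _ => by simp [Prod.ext_iff, h])
      rw [he, Function.update_of_ne h]; ring
  · intro a b hab
    have hne : ((a : A), b) ≠ (a0, b0) := by
      rintro h
      rw [Prod.mk.injEq] at h
      exact hab (h.1 ▸ h.2 ▸ hR)
    simp [hne, hQs a b hab]

lemma split_step (R : A → B → Prop) (P : A → ℝ) (P' : B → ℝ)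
    (hG : Good R P P') (U : Finset A)
    (h1 : 0 < ∑ a ∈ U, P a) (h2 : ∑ a ∈ U, P a < ∑ a, P a)
    (ht : ∑ a ∈ U, P a = ∑ b ∈ NBR R U, P' b)
    (IH : ∀ (R₁ : A → B → Prop) (P₁ : A → ℝ) (P₁' : B → ℝ),
      Good R₁ P₁ P₁' → muF P₁ P₁' + 2 ≤ muF P P' → Sol R₁ P₁ P₁') :
    Sol R P P' := by
  obtain ⟨hP0, hP'0, hm, hH⟩ := hG
  set P1 : A → ℝ := fun a => if a ∈ U then P a else 0 with hP1def
  set P1' : B → ℝ := fun b => if b ∈ NBR R U then P' b else 0 with hP1'def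
  set P2 : A → ℝ := fun a => if a ∈ U then 0 else P a with hP2def
  set P2' : B → ℝ := fun b => if b ∈ NBR R U then 0 else P' b with hP2'def
  set R2 : A → B → Prop := fun a b => R a b ∧ b ∉ NBR R U with hR2def
  have hpt : ∀ a, P2 a = P a - P1 a := by
    intro a; by_cases h : a ∈ U <;> simp [hP1def, hP2def, h]
  have hpt' : ∀ b, P2' b = P' b - P1' b := by
    intro b; by_cases h : b ∈ NBR R U <;> simp [hP1'def, hP2'def, h]
  have hs1 : ∀ V : Finset A, ∑ a ∈ V, P1 a = ∑ a ∈ V ∩ U, P a := by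
    intro V; rw [hP1def]; exact Finset.sum_ite_mem V U P
  have hs1' : ∀ W : Finset B, ∑ b ∈ W, P1' b = ∑ b ∈ W ∩ NBR R U, P' b := by
    intro W; rw [hP1'def]; exact Finset.sum_ite_mem W (NBR R U) P'
  have hs2 : ∀ V : Finset A, ∑ a ∈ V, P2 a = ∑ a ∈ V, P a - ∑ a ∈ V ∩ U, P a := by
    intro V
    rw [← hs1 V, ← Finset.sum_sub_distrib]
    exact Finset.sum_congr rfl (fun a _ => hpt a)
  have hs2' : ∀ W : Finset B, ∑ b ∈ W, P2' b = ∑ b ∈ W, P' b - ∑ b ∈ W ∩ NBR R U, P' b := by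
    intro W
    rw [← hs1' W, ← Finset.sum_sub_distrib]
    exact Finset.sum_congr rfl (fun b _ => hpt' b)
  have hT1 : ∑ a, P1 a = ∑ a ∈ U, P a := by rw [hs1, Finset.univ_inter]
  have hT1' : ∑ b, P1' b = ∑ b ∈ NBR R U, P' b := by rw [hs1', Finset.univ_inter]
  have hT2 : ∑ a, P2 a = ∑ a, P a - ∑ a ∈ U, P a := by rw [hs2, Finset.univ_inter]
  have hT2' : ∑ b, P2' b = ∑ b, P' b - ∑ b ∈ NBR R U, P' b := by
    rw [hs2', Finset.univ_inter]
  -- Good for the first subproblem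
  have hG1 : Good R P1 P1' := by
    refine ⟨?_, ?_, ?_, ?_⟩
    · intro a; rw [hP1def]; dsimp only; split_ifs; exacts [hP0 a, le_refl 0]
    · intro b; rw [hP1'def]; dsimp only; split_ifs; exacts [hP'0 b, le_refl 0]
    · rw [hT1, hT1', ht]
    · intro V
      rw [hs1 V, hs1' (NBR R V)]
      calc ∑ a ∈ V ∩ U, P a ≤ ∑ b ∈ NBR R (V ∩ U), P' b := hH _
        _ ≤ ∑ b ∈ NBR R V ∩ NBR R U, P' b := by
            apply Finset.sum_le_sum_of_subset_of_nonneg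
            · exact Finset.subset_inter (NBR_mono R Finset.inter_subset_left)
                (NBR_mono R Finset.inter_subset_right)
            · intro b _ _; exact hP'0 b
  -- Good for the second subproblem
  have hG2 : Good R2 P2 P2' := by
    refine ⟨?_, ?_, ?_, ?_⟩
    · intro a; rw [hP2def]; dsimp only; split_ifs; exacts [le_refl 0, hP0 a]
    · intro b; rw [hP2'def]; dsimp only; split_ifs; exacts [le_refl 0, hP'0 b]
    · rw [hT2, hT2', hm, ht]
    · intro V
      have hVU : Disjoint (V \ U) U := Finset.sdiff_disjoint
      have hLHS : ∑ a ∈ V, P2 a = ∑ a ∈ V \ U, P a := by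
        rw [hs2 V]
        have := Finset.sum_inter_add_sum_sdiff V U P
        linarith
      have hNU : NBR R ((V \ U) ∪ U) = NBR R (V \ U) ∪ NBR R U := by
        ext b
        simp only [NBR, Finset.mem_filter, Finset.mem_univ, true_and, Finset.mem_union]
        constructor
        · rintro ⟨a, ha | ha, hr⟩
          · exact Or.inl ⟨a, ha, hr⟩
          · exact Or.inr ⟨a, ha, hr⟩
        · rintro (⟨a, ha, hr⟩ | ⟨a, ha, hr⟩)
          · exact ⟨a, Or.inl ha, hr⟩
          · exact ⟨a, Or.inr ha, hr⟩
      have hsplitsum : ∑ b ∈ NBR R (V \ U) ∪ NBR R U, P' b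
          = ∑ b ∈ NBR R (V \ U) \ NBR R U, P' b + ∑ b ∈ NBR R U, P' b := by
        rw [← Finset.sum_union Finset.sdiff_disjoint, Finset.sdiff_union_self_eq_union]
      have hu : ∑ a ∈ (V \ U) ∪ U, P a = ∑ a ∈ V \ U, P a + ∑ a ∈ U, P a :=
        Finset.sum_union hVU
      have hkey : ∑ a ∈ V \ U, P a ≤ ∑ b ∈ NBR R (V \ U) \ NBR R U, P' b := by
        have := hH ((V \ U) ∪ U)
        rw [hu, hNU, hsplitsum] at this
        linarith
      have hsub2 : NBR R (V \ U) \ NBR R U ⊆ NBR R2 V := by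
        intro b hb
        rw [Finset.mem_sdiff] at hb
        obtain ⟨hbW, hbU⟩ := hb
        simp only [NBR, Finset.mem_filter, Finset.mem_univ, true_and] at hbW ⊢
        obtain ⟨a, ha, hr⟩ := hbW
        exact ⟨a, (Finset.sdiff_subset) ha, ⟨hr, by simpa [NBR] using hbU⟩⟩
      have heq : ∑ b ∈ NBR R (V \ U) \ NBR R U, P' b
          = ∑ b ∈ NBR R (V \ U) \ NBR R U, P2' b := by
        apply Finset.sum_congr rfl
        intro b hb
        rw [Finset.mem_sdiff] at hb
        rw [hP2'def]; simp [hb.2]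
      have hfin : ∑ b ∈ NBR R (V \ U) \ NBR R U, P2' b ≤ ∑ b ∈ NBR R2 V, P2' b := by
        apply Finset.sum_le_sum_of_subset_of_nonneg hsub2
        intro b _ _
        rw [hP2'def]; dsimp only; split_ifs; exacts [le_refl 0, hP'0 b]
      rw [hLHS]
      linarith
  -- cardinality bounds
  have hposdiff : 0 < ∑ a ∈ Finset.univ \ U, P a := by
    have := Finset.sum_inter_add_sum_sdiff Finset.univ U P
    rw [Finset.univ_inter] at this
    linarith
  have hposdiff' : 0 < ∑ b ∈ Finset.univ \ NBR R U, P' b := by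
    have := Finset.sum_inter_add_sum_sdiff Finset.univ (NBR R U) P'
    rw [Finset.univ_inter] at this
    linarith
  obtain ⟨a2, ha2mem, ha2⟩ := exists_ne_zero_of_sum_pos hposdiff
  obtain ⟨b2, hb2mem, hb2⟩ := exists_ne_zero_of_sum_pos hposdiff'
  obtain ⟨a1, ha1mem, ha1⟩ := exists_ne_zero_of_sum_pos h1
  obtain ⟨b1, hb1mem, hb1⟩ := exists_ne_zero_of_sum_pos (h1.trans_le (le_of_eq ht))
  rw [Finset.mem_sdiff] at ha2mem hb2mem
  have hsupp1 : ∀ x, P1 x ≠ 0 → P x ≠ 0 := by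
    intro x hx; rw [hP1def] at hx; by_cases h : x ∈ U
    · simpa [h] using hx
    · simp [h] at hx
  have hsupp1' : ∀ x, P1' x ≠ 0 → P' x ≠ 0 := by
    intro x hx; rw [hP1'def] at hx; by_cases h : x ∈ NBR R U
    · simpa [h] using hx
    · simp [h] at hx
  have hsupp2 : ∀ x, P2 x ≠ 0 → P x ≠ 0 := by
    intro x hx; rw [hP2def] at hx; by_cases h : x ∈ U
    · simp [h] at hx
    · simpa [h] using hx
  have hsupp2' : ∀ x, P2' x ≠ 0 → P' x ≠ 0 := by
    intro x hx; rw [hP2'def] at hx; by_cases h : x ∈ NBR R U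
    · simp [h] at hx
    · simpa [h] using hx
  have hc1 : (suppF P1).card < (suppF P).card :=
    suppF_card_lt hsupp1 (by rw [hP1def]; simp [ha2mem.2]) ha2
  have hc1' : (suppF P1').card < (suppF P').card :=
    suppF_card_lt hsupp1' (by rw [hP1'def]; simp [hb2mem.2]) hb2
  have hc2 : (suppF P2).card < (suppF P).card :=
    suppF_card_lt hsupp2 (by rw [hP2def]; simp [ha1mem]) ha1
  have hc2' : (suppF P2').card < (suppF P').card :=
    suppF_card_lt hsupp2' (by rw [hP2'def]; simp [hb1mem]) hb1
  have hmu1 : muF P1 P1' + 2 ≤ muF P P' := by unfold muF; omega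
  have hmu2 : muF P2 P2' + 2 ≤ muF P P' := by unfold muF; omega
  obtain ⟨Q1, hQ10, hQ1r, hQ1c, hQ1s⟩ := IH R P1 P1' hG1 hmu1
  obtain ⟨Q2, hQ20, hQ2r, hQ2c, hQ2s⟩ := IH R2 P2 P2' hG2 hmu2
  refine ⟨fun p => Q1 p + Q2 p, ?_, ?_, ?_, ?_⟩
  · intro p; exact add_nonneg (hQ10 p) (hQ20 p)
  · intro a
    rw [Finset.sum_add_distrib, hQ1r a, hQ2r a, hpt a]; ring
  · intro b
    rw [Finset.sum_add_distrib, hQ1c b, hQ2c b, hpt' b]; ring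
  · intro a b hab
    show Q1 (a, b) + Q2 (a, b) = 0
    rw [hQ1s a b hab, hQ2s a b (by rw [hR2def]; dsimp only; tauto), add_zero]


theorem strassen_rec : ∀ (n : ℕ) (R : A → B → Prop) (P : A → ℝ) (P' : B → ℝ),
    Good R P P' → muF P P' ≤ n → Sol R P P' := by
  intro n
  induction n with
  | zero =>
    intro R P P' hG hmu
    have hP : ∀ a, P a = 0 := by
      intro a; by_contra h
      have hmem : a ∈ suppF P := by simp [suppF, h]
      have := Finset.card_pos.2 ⟨a, hmem⟩
      unfold muF at hmu; omega
    have hP' : ∀ b, P' b = 0 := by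
      intro b; by_contra h
      have hmem : b ∈ suppF P' := by simp [suppF, h]
      have := Finset.card_pos.2 ⟨b, hmem⟩
      unfold muF at hmu; omega
    exact sol_zero R hP hP'
  | succ n ih =>
    intro R P P' hG hmu
    obtain ⟨hP0, hP'0, hm, hH⟩ := hG
    by_cases hmz : ∑ a, P a = 0
    · have hP : ∀ a, P a = 0 := fun a =>
        (Finset.sum_eq_zero_iff_of_nonneg (fun a _ => hP0 a)).1 hmz a (Finset.mem_univ a)
      have hP' : ∀ b, P' b = 0 := fun b =>
        (Finset.sum_eq_zero_iff_of_nonneg (fun b _ => hP'0 b)).1 (by rw [← hm]; exact hmz)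
          b (Finset.mem_univ b)
      exact sol_zero R hP hP'
    · have hmpos : 0 < ∑ a, P a :=
        lt_of_le_of_ne (Finset.sum_nonneg fun a _ => hP0 a) (Ne.symm hmz)
      by_cases hsp : ∃ U : Finset A, (0 < ∑ a ∈ U, P a) ∧ (∑ a ∈ U, P a < ∑ a, P a) ∧
          (∑ a ∈ U, P a = ∑ b ∈ NBR R U, P' b)
      · obtain ⟨U, hU1, hU2, hU3⟩ := hsp
        exact split_step R P P' ⟨hP0, hP'0, hm, hH⟩ U hU1 hU2 hU3
          (fun R₁ P₁ P₁' hG₁ hmu₁ => ih R₁ P₁ P₁' hG₁ (by omega))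
      · -- reduction step
        obtain ⟨a0, -, ha0⟩ := exists_ne_zero_of_sum_pos hmpos
        have ha0pos : 0 < P a0 := lt_of_le_of_ne (hP0 a0) (Ne.symm ha0)
        have hNpos : 0 < ∑ b ∈ NBR R {a0}, P' b := by
          have := hH {a0}
          rw [Finset.sum_singleton] at this
          linarith
        obtain ⟨b0, hb0mem, hb0ne⟩ := exists_ne_zero_of_sum_pos hNpos
        have hb0pos : 0 < P' b0 := lt_of_le_of_ne (hP'0 b0) (Ne.symm hb0ne)
        have hRab : R a0 b0 := by
          simp only [NBR, Finset.mem_filter, Finset.mem_univ, true_and,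
            Finset.mem_singleton] at hb0mem
          obtain ⟨a, rfl, hr⟩ := hb0mem
          exact hr
        set slack : Finset A → ℝ := fun V => (∑ b ∈ NBR R V, P' b) - ∑ a ∈ V, P a
          with hslackdef
        set S : Finset (Finset A) :=
          Finset.univ.filter (fun V => a0 ∉ V ∧ b0 ∈ NBR R V ∧ 0 < ∑ a ∈ V, P a) with hSdef
        have hmemS : ∀ V ∈ S, a0 ∉ V ∧ b0 ∈ NBR R V ∧ 0 < ∑ a ∈ V, P a := by
          intro V hV
          rw [hSdef, Finset.mem_filter] at hV
          exact hV.2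
        have hVlt : ∀ V : Finset A, a0 ∉ V → ∑ a ∈ V, P a ≤ ∑ a, P a - P a0 := by
          intro V hV
          have hsub : V ⊆ Finset.univ.erase a0 := fun x hx =>
            Finset.mem_erase.2 ⟨fun he => hV (he ▸ hx), Finset.mem_univ x⟩
          have hle : ∑ a ∈ V, P a ≤ ∑ a ∈ Finset.univ.erase a0, P a :=
            Finset.sum_le_sum_of_subset_of_nonneg hsub (fun a _ _ => hP0 a)
          have herase : ∑ a ∈ Finset.univ.erase a0, P a = ∑ a, P a - P a0 :=
            Finset.sum_erase_eq_sub (Finset.mem_univ a0)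
          linarith
        have hslackpos : ∀ V ∈ S, 0 < slack V := by
          intro V hV
          obtain ⟨hV1, hV2, hV3⟩ := hmemS V hV
          rcases lt_or_eq_of_le (hH V) with h | h
          · rw [hslackdef]; dsimp only; linarith
          · exact absurd ⟨V, hV3, by linarith [hVlt V hV1], h⟩ hsp
        set δ : ℝ := if hS : S.Nonempty then S.inf' hS slack else P a0 with hδdef
        have hδpos : 0 < δ := by
          rw [hδdef]; split_ifs with hS
          · exact (Finset.lt_inf'_iff hS).2 (fun V hV => hslackpos V hV)
          · exact ha0pos
        have hδle : ∀ V ∈ S, δ ≤ slack V := by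
          intro V hV
          rw [hδdef, dif_pos ⟨V, hV⟩]
          exact Finset.inf'_le _ hV
        set ε : ℝ := min (min (P a0) (P' b0)) δ with hεdef
        have hεpos : 0 < ε := lt_min (lt_min ha0pos hb0pos) hδpos
        have hεa : ε ≤ P a0 := le_trans (min_le_left _ _) (min_le_left _ _)
        have hεb : ε ≤ P' b0 := le_trans (min_le_left _ _) (min_le_right _ _)
        set Pt : A → ℝ := Function.update P a0 (P a0 - ε) with hPtdef
        set Pt' : B → ℝ := Function.update P' b0 (P' b0 - ε) with hPt'def
        have hsumt : ∀ V : Finset A,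
            ∑ a ∈ V, Pt a = (∑ a ∈ V, P a) - (if a0 ∈ V then ε else 0) := by
          intro V; rw [hPtdef]; exact sum_update_sub P a0 ε V
        have hsumt' : ∀ W : Finset B,
            ∑ b ∈ W, Pt' b = (∑ b ∈ W, P' b) - (if b0 ∈ W then ε else 0) := by
          intro W; rw [hPt'def]; exact sum_update_sub P' b0 ε W
        have hPt0 : ∀ a, 0 ≤ Pt a := by
          intro a; rw [hPtdef]
          by_cases h : a = a0
          · subst h; rw [Function.update_self]; linarith
          · rw [Function.update_of_ne h]; exact hP0 a
        have hPt'0 : ∀ b, 0 ≤ Pt' b := by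
          intro b; rw [hPt'def]
          by_cases h : b = b0
          · subst h; rw [Function.update_self]; linarith
          · rw [Function.update_of_ne h]; exact hP'0 b
        have hmt : ∑ a, Pt a = ∑ b, Pt' b := by
          rw [hsumt, hsumt', if_pos (Finset.mem_univ a0), if_pos (Finset.mem_univ b0), hm]
        have hHt : ∀ V : Finset A, ∑ a ∈ V, Pt a ≤ ∑ b ∈ NBR R V, Pt' b := by
          intro V
          rw [hsumt, hsumt']
          by_cases haV : a0 ∈ V
          · have hbV : b0 ∈ NBR R V := by
              simp only [NBR, Finset.mem_filter, Finset.mem_univ, true_and]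
              exact ⟨a0, haV, hRab⟩
            rw [if_pos haV, if_pos hbV]
            linarith [hH V]
          · by_cases hbV : b0 ∈ NBR R V
            · by_cases hVp : 0 < ∑ a ∈ V, P a
              · have hVS : V ∈ S := by
                  rw [hSdef, Finset.mem_filter]
                  exact ⟨Finset.mem_univ V, haV, hbV, hVp⟩
                have hεs : ε ≤ slack V := le_trans (min_le_right _ _) (hδle V hVS)
                rw [hslackdef] at hεs
                rw [if_neg haV, if_pos hbV]
                dsimp only at hεs
                linarith
              · have hV0 : ∑ a ∈ V, P a = 0 :=
                  le_antisymm (le_of_not_gt hVp) (Finset.sum_nonneg fun a _ => hP0 a)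
                have hsingle : P' b0 ≤ ∑ b ∈ NBR R V, P' b :=
                  Finset.single_le_sum (fun b _ => hP'0 b) hbV
                rw [if_neg haV, if_pos hbV]
                linarith
            · rw [if_neg haV, if_neg hbV]
              linarith [hH V]
        have hGt : Good R Pt Pt' := ⟨hPt0, hPt'0, hmt, hHt⟩
        have hsuppt : ∀ x, Pt x ≠ 0 → P x ≠ 0 := by
          intro x hx
          by_cases h : x = a0
          · subst h; exact ha0
          · rw [hPtdef, Function.update_of_ne h] at hx; exact hx
        have hsuppt' : ∀ x, Pt' x ≠ 0 → P' x ≠ 0 := by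
          intro x hx
          by_cases h : x = b0
          · subst h; exact hb0ne
          · rw [hPt'def, Function.update_of_ne h] at hx; exact hx
        have hmut : muF Pt Pt' ≤ muF P P' :=
          add_le_add (suppF_card_le hsuppt) (suppF_card_le hsuppt')
        by_cases hca : ε = P a0
        · have hz : Pt a0 = 0 := by rw [hPtdef, Function.update_self, hca, sub_self]
          have hlt : (suppF Pt).card < (suppF P).card := suppF_card_lt hsuppt hz ha0
          have hmn : muF Pt Pt' ≤ n := by
            have := suppF_card_le hsuppt'
            unfold muF at *; omega
          exact add_atom R P P' a0 b0 ε hεpos.le hRab (ih R Pt Pt' hGt hmn)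
        · by_cases hcb : ε = P' b0
          · have hz : Pt' b0 = 0 := by rw [hPt'def, Function.update_self, hcb, sub_self]
            have hlt : (suppF Pt').card < (suppF P').card := suppF_card_lt hsuppt' hz hb0ne
            have hmn : muF Pt Pt' ≤ n := by
              have := suppF_card_le hsuppt
              unfold muF at *; omega
            exact add_atom R P P' a0 b0 ε hεpos.le hRab (ih R Pt Pt' hGt hmn)
          · have hεa' : ε < P a0 := lt_of_le_of_ne hεa hca
            have hεδ : ε = δ := by
              rcases le_total (min (P a0) (P' b0)) δ with h | h
              · have he : ε = min (P a0) (P' b0) := by rw [hεdef]; exact min_eq_left h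
                rcases min_choice (P a0) (P' b0) with h' | h'
                · exact absurd (he.trans h') hca
                · exact absurd (he.trans h') hcb
              · rw [hεdef]; exact min_eq_right h
            have hSne : S.Nonempty := by
              by_contra hS
              have hδa : δ = P a0 := by rw [hδdef, dif_neg hS]
              exact hca (hεδ.trans hδa)
            obtain ⟨U0, hU0S, hU0inf⟩ := Finset.exists_mem_eq_inf' hSne slack
            have hδval : δ = slack U0 := by rw [hδdef, dif_pos hSne]; exact hU0inf
            obtain ⟨hU0a, hU0b, hU0p⟩ := hmemS U0 hU0S
            have e1 : ∑ a ∈ U0, Pt a = ∑ a ∈ U0, P a := by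
              rw [hsumt, if_neg hU0a, sub_zero]
            have e2 : ∑ b ∈ NBR R U0, Pt' b = ∑ b ∈ NBR R U0, P' b - ε := by
              rw [hsumt', if_pos hU0b]
            have h1' : 0 < ∑ a ∈ U0, Pt a := by rw [e1]; exact hU0p
            have h2' : ∑ a ∈ U0, Pt a < ∑ a, Pt a := by
              rw [e1, hsumt, if_pos (Finset.mem_univ a0)]
              have := hVlt U0 hU0a
              linarith
            have ht' : ∑ a ∈ U0, Pt a = ∑ b ∈ NBR R U0, Pt' b := by
              rw [e1, e2]
              have hεval : ε = slack U0 := hεδ.trans hδval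
              rw [hslackdef] at hεval
              dsimp only at hεval
              linarith
            have hsol : Sol R Pt Pt' := split_step R Pt Pt' hGt U0 h1' h2' ht'
              (fun R₁ P₁ P₁' hG₁ hmu₁ => ih R₁ P₁ P₁' hG₁ (by omega))
            exact add_atom R P P' a0 b0 ε hεpos.le hRab hsol


end Strassen

/-- Strassen's theorem for finite sets. -/
theorem stmt0 {A B : Type*} [Fintype A] [Fintype B]
    (P : A → ℝ) (P' : B → ℝ) (R : A → B → Prop)
    (hP0 : ∀ a, 0 ≤ P a) (hP1 : ∑ a, P a = 1)
    (hP'0 : ∀ b, 0 ≤ P' b) (hP'1 : ∑ b, P' b = 1) :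
    (∃ Q : A × B → ℝ, (∀ p, 0 ≤ Q p) ∧
        (∀ a, ∑ b, Q (a, b) = P a) ∧ (∀ b, ∑ a, Q (a, b) = P' b) ∧
        ∑ p ∈ Finset.univ.filter (fun p : A × B => R p.1 p.2), Q p = 1) ↔
      ∀ U : Finset A, ∑ a ∈ U, P a ≤
        ∑ b ∈ Finset.univ.filter (fun b => ∃ a ∈ U, R a b), P' b := by
  constructor
  · rintro ⟨Q, hQ0, hQr, hQc, hQR⟩ U
    have htot : ∑ p : A × B, Q p = 1 := by
      rw [Fintype.sum_prod_type]
      simp only [hQr]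
      exact hP1
    have hzero : ∀ p : A × B, ¬ R p.1 p.2 → Q p = 0 := by
      intro p hp
      have hsplit := Finset.sum_filter_add_sum_filter_not Finset.univ
        (fun p : A × B => R p.1 p.2) Q
      rw [hQR, htot] at hsplit
      have hcompl : ∑ p ∈ Finset.univ.filter (fun p : A × B => ¬ R p.1 p.2), Q p = 0 := by
        linarith
      exact (Finset.sum_eq_zero_iff_of_nonneg (fun p _ => hQ0 p)).1 hcompl p (by simp [hp])
    set N : Finset B := Finset.univ.filter (fun b => ∃ a ∈ U, R a b) with hN
    have h1 : ∑ a ∈ U, P a = ∑ p ∈ U ×ˢ (Finset.univ : Finset B), Q p := by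
      rw [Finset.sum_product]
      exact (Finset.sum_congr rfl (fun a _ => (hQr a).symm))
    have h2 : ∑ p ∈ U ×ˢ N, Q p = ∑ p ∈ U ×ˢ (Finset.univ : Finset B), Q p := by
      apply Finset.sum_subset
        (Finset.product_subset_product (Finset.Subset.refl U) (Finset.subset_univ N))
      intro p hp hnp
      rw [Finset.mem_product] at hp hnp
      apply hzero
      intro hr
      apply hnp
      refine ⟨hp.1, ?_⟩
      rw [hN, Finset.mem_filter]
      exact ⟨Finset.mem_univ _, p.1, hp.1, hr⟩
    have h3 : ∑ p ∈ U ×ˢ N, Q p ≤ ∑ p ∈ (Finset.univ : Finset A) ×ˢ N, Q p :=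
      Finset.sum_le_sum_of_subset_of_nonneg
        (Finset.product_subset_product (Finset.subset_univ U) (Finset.Subset.refl N))
        (fun p _ _ => hQ0 p)
    have h4 : ∑ p ∈ (Finset.univ : Finset A) ×ˢ N, Q p = ∑ b ∈ N, P' b := by
      rw [Finset.sum_product_right]
      exact Finset.sum_congr rfl (fun b _ => hQc b)
    rw [h1, ← h2]
    rw [h4] at h3
    exact h3
  · intro hU
    obtain ⟨Q, hQ0, hQr, hQc, hQs⟩ := strassen_rec (muF P P') R P P'
      ⟨hP0, hP'0, by rw [hP1, hP'1], fun U => hU U⟩ le_rfl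
    refine ⟨Q, hQ0, hQr, hQc, ?_⟩
    have htot : ∑ p : A × B, Q p = 1 := by
      rw [Fintype.sum_prod_type]
      simp only [hQr]
      exact hP1
    rw [← htot]
    apply Finset.sum_subset (Finset.filter_subset _ _)
    intro p _ hp
    rw [Finset.mem_filter] at hp
    push_neg at hp
    exact hQs p.1 p.2 (hp (Finset.mem_univ p))
end

section
/- Let G = (V, E, w) be a finite weighted bipartite graph with bipartition {A, B} and vertex weight function w : V → [0,∞) satisfying w(A) = w(B). If w(U) ≤ w(N_G(U)) for all U ⊆ A, then G contains a spanning subgraph F that is a forest (contains no cycles) and which still satisfies w(U) ≤ w(N_F(U)) for all U ⊆ A. -/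
set_option linter.unusedSectionVars false

open Finset
open scoped Classical

/-- The simple graph on `A ⊕ B` associated with a bipartite adjacency relation. -/
def toGraph {A B : Type*} (E : A → B → Prop) : SimpleGraph (A ⊕ B) :=
  SimpleGraph.fromRel (fun v w => ∃ a b, v = Sum.inl a ∧ w = Sum.inr b ∧ E a b)

namespace Subforest

variable {A B : Type*} [Fintype A] [Fintype B]

noncomputable def nbhd (E : A → B → Prop) (U : Finset A) : Finset B :=
  univ.filter (fun b => ∃ a ∈ U, E a b)

noncomputable def slack (E : A → B → Prop) (wA : A → ℝ) (wB : B → ℝ) (U : Finset A) : ℝ :=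
  ∑ b ∈ nbhd E U, wB b - ∑ a ∈ U, wA a

lemma nbhd_mono (E : A → B → Prop) {U V : Finset A} (h : U ⊆ V) : nbhd E U ⊆ nbhd E V := by
  intro b hb
  simp only [nbhd, mem_filter, mem_univ, true_and] at hb ⊢
  obtain ⟨a, ha, hE⟩ := hb
  exact ⟨a, h ha, hE⟩

lemma nbhd_union (E : A → B → Prop) (U V : Finset A) :
    nbhd E (U ∪ V) = nbhd E U ∪ nbhd E V := by
  ext b
  simp only [nbhd, mem_filter, mem_univ, true_and, mem_union]
  constructor
  · rintro ⟨a, ha | ha, hE⟩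
    · exact Or.inl ⟨a, ha, hE⟩
    · exact Or.inr ⟨a, ha, hE⟩
  · rintro (⟨a, ha, hE⟩ | ⟨a, ha, hE⟩)
    · exact ⟨a, Or.inl ha, hE⟩
    · exact ⟨a, Or.inr ha, hE⟩

lemma nbhd_empty (E : A → B → Prop) : nbhd E (∅ : Finset A) = ∅ := by
  ext b; simp [nbhd]

lemma mem_nbhd_of (E : A → B → Prop) {U : Finset A} {a : A} {b : B} (ha : a ∈ U) (hE : E a b) :
    b ∈ nbhd E U := by
  simp only [nbhd, mem_filter, mem_univ, true_and]
  exact ⟨a, ha, hE⟩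

lemma slack_empty (E : A → B → Prop) (wA : A → ℝ) (wB : B → ℝ) :
    slack E wA wB (∅ : Finset A) = 0 := by
  simp [slack, nbhd_empty]

lemma slack_union_inter_le (E : A → B → Prop) (wA : A → ℝ) (wB : B → ℝ)
    (hwB : ∀ b, 0 ≤ wB b) (U V : Finset A) :
    slack E wA wB (U ∪ V) + slack E wA wB (U ∩ V) ≤ slack E wA wB U + slack E wA wB V := by
  have h1 : ∑ a ∈ U ∪ V, wA a + ∑ a ∈ U ∩ V, wA a = ∑ a ∈ U, wA a + ∑ a ∈ V, wA a :=
    Finset.sum_union_inter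
  have h2 : ∑ b ∈ nbhd E U ∪ nbhd E V, wB b + ∑ b ∈ nbhd E U ∩ nbhd E V, wB b
      = ∑ b ∈ nbhd E U, wB b + ∑ b ∈ nbhd E V, wB b := Finset.sum_union_inter
  have h3 : ∑ b ∈ nbhd E (U ∪ V), wB b = ∑ b ∈ nbhd E U ∪ nbhd E V, wB b := by
    rw [nbhd_union]
  have h4 : ∑ b ∈ nbhd E (U ∩ V), wB b ≤ ∑ b ∈ nbhd E U ∩ nbhd E V, wB b := by
    apply Finset.sum_le_sum_of_subset_of_nonneg
    · intro b hb
      exact mem_inter.2 ⟨nbhd_mono E inter_subset_left hb, nbhd_mono E inter_subset_right hb⟩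
    · intro b _ _; exact hwB b
  simp only [slack]
  linarith



lemma sum_update_mem {α : Type*} [Fintype α] (f : α → ℝ) (i : α) (v : ℝ) (s : Finset α)
    (h : i ∈ s) : ∑ x ∈ s, Function.update f i v x = ∑ x ∈ s, f x - f i + v := by
  rw [Finset.sum_update_of_mem h, Finset.sum_sdiff_eq_sub (singleton_subset_iff.2 h)]
  simp
  ring

lemma sum_update_notMem {α : Type*} [Fintype α] (f : α → ℝ) (i : α) (v : ℝ) (s : Finset α)
    (h : i ∉ s) : ∑ x ∈ s, Function.update f i v x = ∑ x ∈ s, f x := by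
  apply Finset.sum_congr rfl
  intro a ha
  exact Function.update_of_ne (by rintro rfl; exact h ha) _ _

lemma exists_pos_of_sum_pos {α : Type*} (s : Finset α) (f : α → ℝ) (h : 0 < ∑ x ∈ s, f x) :
    ∃ x ∈ s, 0 < f x := by
  by_contra hno
  push_neg at hno
  have : ∑ x ∈ s, f x ≤ 0 := Finset.sum_nonpos hno
  linarith

lemma feas (E : A → B → Prop) :
    ∀ (n : ℕ) (wA : A → ℝ) (wB : B → ℝ),
    (∀ a, 0 ≤ wA a) → (∀ b, 0 ≤ wB b) → (∑ a, wA a = ∑ b, wB b) →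
    (∀ U : Finset A, 0 ≤ slack E wA wB U) →
    ((univ.filter fun a => 0 < wA a).card + (univ.filter fun b => 0 < wB b).card
      + (univ.filter fun U : Finset A => slack E wA wB U ≠ 0).card ≤ n) →
    ∃ x : A → B → ℝ, (∀ a b, 0 ≤ x a b) ∧ (∀ a b, x a b ≠ 0 → E a b) ∧
      (∀ a, ∑ b, x a b = wA a) ∧ (∀ b, ∑ a, x a b = wB b) := by
  have base : ∀ (wA : A → ℝ) (wB : B → ℝ), (∀ a, 0 ≤ wA a) → (∀ b, 0 ≤ wB b) →
      (∑ a, wA a = ∑ b, wB b) → (¬ ∃ a, 0 < wA a) →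
      ∃ x : A → B → ℝ, (∀ a b, 0 ≤ x a b) ∧ (∀ a b, x a b ≠ 0 → E a b) ∧
        (∀ a, ∑ b, x a b = wA a) ∧ (∀ b, ∑ a, x a b = wB b) := by
    intro wA wB hwA hwB hAB hpos
    push_neg at hpos
    have hA0 : ∀ a, wA a = 0 := fun a => le_antisymm (hpos a) (hwA a)
    have hsum0 : ∑ b, wB b = 0 := by
      rw [← hAB]; exact Finset.sum_eq_zero (fun a _ => hA0 a)
    have hB0 : ∀ b, wB b = 0 := by
      intro b
      have := (Finset.sum_eq_zero_iff_of_nonneg (fun b _ => hwB b)).1 hsum0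
      exact this b (mem_univ b)
    exact ⟨fun _ _ => 0, fun _ _ => le_refl _, fun a b h => absurd rfl h,
      fun a => by simp [hA0 a], fun b => by simp [hB0 b]⟩
  intro n
  induction n with
  | zero =>
    intro wA wB hwA hwB hAB hall hcard
    by_cases hpos : ∃ a, 0 < wA a
    · exfalso
      obtain ⟨a0, ha0⟩ := hpos
      have : a0 ∈ univ.filter fun a => 0 < wA a := mem_filter.2 ⟨mem_univ _, ha0⟩
      have h1 : 0 < (univ.filter fun a => 0 < wA a).card := Finset.card_pos.2 ⟨a0, this⟩
      omega
    · exact base wA wB hwA hwB hAB hpos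
  | succ n ih =>
    intro wA wB hwA hwB hAB hall hcard
    by_cases hpos : ∃ a, 0 < wA a
    swap
    · exact base wA wB hwA hwB hAB hpos
    obtain ⟨a0, ha0⟩ := hpos
    -- the union of all tight sets avoiding a0
    set T : Finset A :=
      ((univ : Finset (Finset A)).filter (fun U => slack E wA wB U = 0 ∧ a0 ∉ U)).sup id with hTdef
    have hT : slack E wA wB T = 0 ∧ a0 ∉ T := by
      rw [hTdef]
      apply Finset.sup_induction (p := fun V : Finset A => slack E wA wB V = 0 ∧ a0 ∉ V)
      · exact ⟨slack_empty E wA wB, notMem_empty a0⟩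
      · rintro U ⟨hU1, hU2⟩ V ⟨hV1, hV2⟩
        constructor
        · have h1 := slack_union_inter_le E wA wB hwB U V
          have h2 := hall (U ∪ V)
          have h3 := hall (U ∩ V)
          have : slack E wA wB (U ∪ V) = 0 := by linarith
          exact this
        · simp only [sup_eq_union, mem_union]
          rintro (h | h)
          exacts [hU2 h, hV2 h]
      · intro U hU
        exact (mem_filter.1 hU).2
    have hsubT : ∀ U : Finset A, slack E wA wB U = 0 → a0 ∉ U → U ⊆ T := by
      intro U h1 h2
      have hmem : U ∈ (univ : Finset (Finset A)).filter
          (fun V => slack E wA wB V = 0 ∧ a0 ∉ V) := mem_filter.2 ⟨mem_univ U, h1, h2⟩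
      exact Finset.le_sup (f := id) hmem
    -- find b0
    have key : wA a0 ≤ ∑ b ∈ nbhd E {a0} \ nbhd E T, wB b := by
      have h1 := hall (insert a0 T)
      have h2 : ∑ a ∈ insert a0 T, wA a = wA a0 + ∑ a ∈ T, wA a :=
        Finset.sum_insert hT.2
      have h3 : nbhd E (insert a0 T) = nbhd E T ∪ (nbhd E {a0} \ nbhd E T) := by
        rw [Finset.insert_eq, nbhd_union, Finset.union_sdiff_self_eq_union, Finset.union_comm]
      have h4 : ∑ b ∈ nbhd E (insert a0 T), wB b
          = ∑ b ∈ nbhd E T, wB b + ∑ b ∈ nbhd E {a0} \ nbhd E T, wB b := by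
        rw [h3, Finset.sum_union Finset.disjoint_sdiff]
      have h5 : slack E wA wB T = 0 := hT.1
      simp only [slack] at h1 h5
      rw [h2, h4] at h1
      linarith
    have hb0ex : ∃ b ∈ nbhd E {a0} \ nbhd E T, 0 < wB b :=
      exists_pos_of_sum_pos _ _ (lt_of_lt_of_le ha0 key)
    obtain ⟨b0, hb0mem, hb0pos⟩ := hb0ex
    have hEb0 : E a0 b0 := by
      have := (mem_sdiff.1 hb0mem).1
      simp only [nbhd, mem_filter, mem_univ, true_and, mem_singleton] at this
      obtain ⟨a, rfl, hE⟩ := this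
      exact hE
    have hb0T : b0 ∉ nbhd E T := (mem_sdiff.1 hb0mem).2
    -- the amount t to route
    set S : Finset ℝ :=
      insert (wA a0) (insert (wB b0)
        (((univ : Finset (Finset A)).filter (fun U => a0 ∉ U ∧ b0 ∈ nbhd E U)).image
          (slack E wA wB))) with hSdef
    have hSne : S.Nonempty := Finset.insert_nonempty _ _
    set t : ℝ := S.min' hSne with htdef
    have hSpos : ∀ r ∈ S, 0 < r := by
      intro r hr
      simp only [hSdef, mem_insert, mem_image, mem_filter, mem_univ, true_and] at hr
      rcases hr with rfl | rfl | ⟨U, ⟨hU1, hU2⟩, rfl⟩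
      · exact ha0
      · exact hb0pos
      · rcases eq_or_lt_of_le (hall U) with h | h
        · exfalso
          exact hb0T (nbhd_mono E (hsubT U h.symm hU1) hU2)
        · exact h
    have htpos : 0 < t := hSpos _ (S.min'_mem hSne)
    have htA : t ≤ wA a0 := S.min'_le _ (mem_insert_self _ _)
    have htB : t ≤ wB b0 := S.min'_le _ (by simp [hSdef])
    have htU : ∀ U : Finset A, a0 ∉ U → b0 ∈ nbhd E U → t ≤ slack E wA wB U := by
      intro U h1 h2
      apply S.min'_le
      simp only [hSdef, mem_insert, mem_image, mem_filter, mem_univ, true_and]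
      exact Or.inr (Or.inr ⟨U, ⟨h1, h2⟩, rfl⟩)
    -- updated weights
    set wA' : A → ℝ := Function.update wA a0 (wA a0 - t) with hwA'def
    set wB' : B → ℝ := Function.update wB b0 (wB b0 - t) with hwB'def
    have hsumA : ∀ U : Finset A, ∑ a ∈ U, wA' a
        = ∑ a ∈ U, wA a - (if a0 ∈ U then t else 0) := by
      intro U
      by_cases h : a0 ∈ U
      · rw [if_pos h, hwA'def, sum_update_mem wA a0 _ U h]; ring
      · rw [if_neg h, hwA'def, sum_update_notMem wA a0 _ U h]; ring
    have hsumB : ∀ V : Finset B, ∑ b ∈ V, wB' b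
        = ∑ b ∈ V, wB b - (if b0 ∈ V then t else 0) := by
      intro V
      by_cases h : b0 ∈ V
      · rw [if_pos h, hwB'def, sum_update_mem wB b0 _ V h]; ring
      · rw [if_neg h, hwB'def, sum_update_notMem wB b0 _ V h]; ring
    have hslack' : ∀ U : Finset A, slack E wA' wB' U
        = slack E wA wB U + (if a0 ∈ U then t else 0)
          - (if b0 ∈ nbhd E U then t else 0) := by
      intro U
      simp only [slack]
      rw [hsumA U, hsumB (nbhd E U)]
      ring
    have hwA'nn : ∀ a, 0 ≤ wA' a := by
      intro a
      rcases eq_or_ne a a0 with rfl | h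
      · rw [hwA'def, Function.update_self]; linarith
      · rw [hwA'def, Function.update_of_ne h]; exact hwA a
    have hwB'nn : ∀ b, 0 ≤ wB' b := by
      intro b
      rcases eq_or_ne b b0 with rfl | h
      · rw [hwB'def, Function.update_self]; linarith
      · rw [hwB'def, Function.update_of_ne h]; exact hwB b
    have hAB' : ∑ a, wA' a = ∑ b, wB' b := by
      rw [hsumA univ, hsumB univ, if_pos (mem_univ a0), if_pos (mem_univ b0), hAB]
    have hall' : ∀ U : Finset A, 0 ≤ slack E wA' wB' U := by
      intro U
      rw [hslack' U]
      by_cases ha : a0 ∈ U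
      · have hb : b0 ∈ nbhd E U := mem_nbhd_of E ha hEb0
        rw [if_pos ha, if_pos hb]
        have := hall U
        linarith
      · by_cases hb : b0 ∈ nbhd E U
        · rw [if_neg ha, if_pos hb]
          have := htU U ha hb
          linarith
        · rw [if_neg ha, if_neg hb]
          have := hall U
          linarith
    -- monotonicity of the three measure components
    have hmA : (univ.filter fun a => 0 < wA' a) ⊆ (univ.filter fun a => 0 < wA a) := by
      intro a ha
      simp only [mem_filter, mem_univ, true_and] at ha ⊢
      rcases eq_or_ne a a0 with rfl | h
      · exact ha0
      · rwa [hwA'def, Function.update_of_ne h] at ha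
    have hmB : (univ.filter fun b => 0 < wB' b) ⊆ (univ.filter fun b => 0 < wB b) := by
      intro b hb
      simp only [mem_filter, mem_univ, true_and] at hb ⊢
      rcases eq_or_ne b b0 with rfl | h
      · exact hb0pos
      · rwa [hwB'def, Function.update_of_ne h] at hb
    have hmT : (univ.filter fun U : Finset A => slack E wA' wB' U ≠ 0)
        ⊆ (univ.filter fun U : Finset A => slack E wA wB U ≠ 0) := by
      intro U hU
      simp only [mem_filter, mem_univ, true_and] at hU ⊢
      intro h0
      apply hU
      rw [hslack' U, h0]
      by_cases ha : a0 ∈ U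
      · rw [if_pos ha, if_pos (mem_nbhd_of E ha hEb0)]; ring
      · have hb : b0 ∉ nbhd E U := fun hb => hb0T (nbhd_mono E (hsubT U h0 ha) hb)
        rw [if_neg ha, if_neg hb]; ring
    -- strict decrease
    have hstrict : (univ.filter fun a => 0 < wA' a).card
        + (univ.filter fun b => 0 < wB' b).card
        + (univ.filter fun U : Finset A => slack E wA' wB' U ≠ 0).card ≤ n := by
      have hle1 := Finset.card_le_card hmA
      have hle2 := Finset.card_le_card hmB
      have hle3 := Finset.card_le_card hmT
      have hmem := S.min'_mem hSne
      rw [← htdef] at hmem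
      simp only [hSdef, mem_insert, mem_image, mem_filter, mem_univ, true_and] at hmem
      rcases hmem with h | h | ⟨U, ⟨hU1, hU2⟩, hU3⟩
      · -- t = wA a0 : a0 leaves the positive set
        have hlt : (univ.filter fun a => 0 < wA' a).card
            < (univ.filter fun a => 0 < wA a).card := by
          apply Finset.card_lt_card
          refine ⟨hmA, fun hsub => ?_⟩
          have := hsub (mem_filter.2 ⟨mem_univ a0, ha0⟩)
          simp only [mem_filter, mem_univ, true_and] at this
          rw [hwA'def, Function.update_self, h] at this
          linarith
        omega
      · have hlt : (univ.filter fun b => 0 < wB' b).card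
            < (univ.filter fun b => 0 < wB b).card := by
          apply Finset.card_lt_card
          refine ⟨hmB, fun hsub => ?_⟩
          have := hsub (mem_filter.2 ⟨mem_univ b0, hb0pos⟩)
          simp only [mem_filter, mem_univ, true_and] at this
          rw [hwB'def, Function.update_self, h] at this
          linarith
        omega
      · -- t = slack U : U becomes tight
        have hUt : slack E wA' wB' U = 0 := by
          rw [hslack' U, if_neg hU1, if_pos hU2, hU3]; ring
        have hUnt : slack E wA wB U ≠ 0 := by rw [hU3]; linarith
        have hlt : (univ.filter fun U : Finset A => slack E wA' wB' U ≠ 0).card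
            < (univ.filter fun U : Finset A => slack E wA wB U ≠ 0).card := by
          apply Finset.card_lt_card
          refine ⟨hmT, fun hsub => ?_⟩
          have := hsub (mem_filter.2 ⟨mem_univ U, hUnt⟩)
          simp only [mem_filter, mem_univ, true_and] at this
          exact this hUt
        omega
    obtain ⟨x', hx'nn, hx'E, hx'row, hx'col⟩ := ih wA' wB' hwA'nn hwB'nn hAB' hall' hstrict
    refine ⟨fun a b => x' a b + if a = a0 ∧ b = b0 then t else 0, ?_, ?_, ?_, ?_⟩
    · intro a b
      show 0 ≤ x' a b + if a = a0 ∧ b = b0 then t else 0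
      have h1 : (0:ℝ) ≤ if a = a0 ∧ b = b0 then t else 0 := by
        split <;> linarith
      have h2 := hx'nn a b
      linarith
    · intro a b hx
      have hx2 : x' a b + (if a = a0 ∧ b = b0 then t else 0) ≠ 0 := hx
      by_cases h : a = a0 ∧ b = b0
      · rw [h.1, h.2]; exact hEb0
      · rw [if_neg h, add_zero] at hx2
        exact hx'E a b hx2
    · intro a
      rw [Finset.sum_add_distrib, hx'row a]
      by_cases h : a = a0
      · rw [h]
        have hs : ∑ b, (if a0 = a0 ∧ b = b0 then t else 0) = t := by simp
        rw [hs, hwA'def, Function.update_self]; ring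
      · have hs : ∑ b, (if a = a0 ∧ b = b0 then t else 0) = 0 := by
          apply Finset.sum_eq_zero; intro b _; rw [if_neg (fun hh => h hh.1)]
        rw [hs, hwA'def, Function.update_of_ne h]; ring
    · intro b
      rw [Finset.sum_add_distrib, hx'col b]
      by_cases h : b = b0
      · rw [h]
        have hs : ∑ a, (if a = a0 ∧ b0 = b0 then t else 0) = t := by simp
        rw [hs, hwB'def, Function.update_self]; ring
      · have hs : ∑ a, (if a = a0 ∧ b = b0 then t else 0) = 0 := by
          apply Finset.sum_eq_zero; intro a _; rw [if_neg (fun hh => h hh.2)]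
        rw [hs, hwB'def, Function.update_of_ne h]; ring



lemma toGraph_adj {F : A → B → Prop} {u v : A ⊕ B} (h : (toGraph F).Adj u v) :
    (∃ a b, u = Sum.inl a ∧ v = Sum.inr b ∧ F a b) ∨
    (∃ a b, u = Sum.inr b ∧ v = Sum.inl a ∧ F a b) := by
  rw [toGraph, SimpleGraph.fromRel_adj] at h
  rcases h.2 with h' | h'
  · exact Or.inl h'
  · obtain ⟨a, b, h1, h2, h3⟩ := h'
    exact Or.inr ⟨a, b, h2, h1, h3⟩

noncomputable def edgeVec : (A ⊕ B) → (A ⊕ B) → A → B → ℝ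
  | Sum.inl a, Sum.inr b => fun a' b' => if a' = a ∧ b' = b then 1 else 0
  | Sum.inr b, Sum.inl a => fun a' b' => if a' = a ∧ b' = b then -1 else 0
  | _, _ => fun _ _ => 0

noncomputable def zWalk {F : A → B → Prop} :
    ∀ {u v : A ⊕ B}, (toGraph F).Walk u v → A → B → ℝ
  | u, _, SimpleGraph.Walk.cons (v := w) _ p => edgeVec u w + zWalk p
  | _, _, SimpleGraph.Walk.nil => 0

noncomputable def indA : (A ⊕ B) → A → ℝ
  | Sum.inl a', a => if a' = a then 1 else 0
  | Sum.inr _, _ => 0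

noncomputable def indB : (A ⊕ B) → B → ℝ
  | Sum.inr b', b => if b' = b then 1 else 0
  | Sum.inl _, _ => 0

lemma zWalk_row {F : A → B → Prop} :
    ∀ {u v : A ⊕ B} (p : (toGraph F).Walk u v) (a : A),
      ∑ b, zWalk p a b = indA u a - indA v a := by
  intro u v p
  induction p with
  | nil => intro a; simp [zWalk]
  | @cons u w v h p ih =>
    intro a
    have hz : zWalk (SimpleGraph.Walk.cons h p) = edgeVec u w + zWalk p := rfl
    rw [hz]
    simp only [Pi.add_apply]
    rw [Finset.sum_add_distrib, ih a]
    rcases toGraph_adj h with ⟨a1, b1, rfl, rfl, hF⟩ | ⟨a1, b1, rfl, rfl, hF⟩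
    · have he : ∑ b, edgeVec (Sum.inl a1) (Sum.inr b1) a b = if a = a1 then 1 else 0 := by
        by_cases ha : a = a1 <;> simp [edgeVec, ha]
      rw [he]
      simp only [indA]
      by_cases ha : a = a1 <;> simp [ha, eq_comm] <;> ring
    · have he : ∑ b, edgeVec (Sum.inr b1) (Sum.inl a1) a b = if a = a1 then -1 else 0 := by
        by_cases ha : a = a1 <;> simp [edgeVec, ha]
      rw [he]
      simp only [indA]
      by_cases ha : a = a1 <;> simp [ha, eq_comm] <;> ring

lemma zWalk_col {F : A → B → Prop} :
    ∀ {u v : A ⊕ B} (p : (toGraph F).Walk u v) (b : B),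
      ∑ a, zWalk p a b = indB v b - indB u b := by
  intro u v p
  induction p with
  | nil => intro b; simp [zWalk]
  | @cons u w v h p ih =>
    intro b
    have hz : zWalk (SimpleGraph.Walk.cons h p) = edgeVec u w + zWalk p := rfl
    rw [hz]
    simp only [Pi.add_apply]
    rw [Finset.sum_add_distrib, ih b]
    rcases toGraph_adj h with ⟨a1, b1, rfl, rfl, hF⟩ | ⟨a1, b1, rfl, rfl, hF⟩
    · have he : ∑ a, edgeVec (Sum.inl a1) (Sum.inr b1) a b = if b = b1 then 1 else 0 := by
        by_cases hb : b = b1 <;> simp [edgeVec, hb]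
      rw [he]
      simp only [indB]
      by_cases hb : b = b1 <;> simp [hb, eq_comm] <;> ring
    · have he : ∑ a, edgeVec (Sum.inr b1) (Sum.inl a1) a b = if b = b1 then -1 else 0 := by
        by_cases hb : b = b1 <;> simp [edgeVec, hb]
      rw [he]
      simp only [indB]
      by_cases hb : b = b1 <;> simp [hb, eq_comm] <;> ring

lemma zWalk_supp {F : A → B → Prop} :
    ∀ {u v : A ⊕ B} (p : (toGraph F).Walk u v) (a : A) (b : B),
      zWalk p a b ≠ 0 → F a b := by
  intro u v p
  induction p with
  | nil => intro a b h; exact absurd rfl h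
  | @cons u w v h p ih =>
    intro a b hz
    have hz' : edgeVec u w a b + zWalk p a b ≠ 0 := hz
    by_cases he : edgeVec u w a b = 0
    · rw [he, zero_add] at hz'
      exact ih a b hz'
    · rcases toGraph_adj h with ⟨a1, b1, rfl, rfl, hF⟩ | ⟨a1, b1, rfl, rfl, hF⟩
      · simp only [edgeVec] at he
        by_cases hab : a = a1 ∧ b = b1
        · rw [hab.1, hab.2]; exact hF
        · rw [if_neg hab] at he; exact absurd rfl he
      · simp only [edgeVec] at he
        by_cases hab : a = a1 ∧ b = b1
        · rw [hab.1, hab.2]; exact hF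
        · rw [if_neg hab] at he; exact absurd rfl he

lemma zWalk_notMem {F : A → B → Prop} :
    ∀ {u v : A ⊕ B} (p : (toGraph F).Walk u v) (a : A) (b : B),
      s(Sum.inl a, Sum.inr b) ∉ p.edges → zWalk p a b = 0 := by
  intro u v p
  induction p with
  | nil => intro a b _; rfl
  | @cons u w v h p ih =>
    intro a b hmem
    rw [SimpleGraph.Walk.edges_cons, List.mem_cons] at hmem
    push_neg at hmem
    have hz : zWalk (SimpleGraph.Walk.cons h p) a b = edgeVec u w a b + zWalk p a b := rfl
    rw [hz, ih a b hmem.2, add_zero]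
    rcases toGraph_adj h with ⟨a1, b1, rfl, rfl, hF⟩ | ⟨a1, b1, rfl, rfl, hF⟩
    · simp only [edgeVec]
      rw [if_neg]
      rintro ⟨rfl, rfl⟩
      exact hmem.1 rfl
    · simp only [edgeVec]
      rw [if_neg]
      rintro ⟨rfl, rfl⟩
      exact hmem.1 (Sym2.eq_swap)



lemma acyc (E : A → B → Prop) (wA : A → ℝ) (wB : B → ℝ) :
    ∀ (n : ℕ) (x : A → B → ℝ), (∀ a b, 0 ≤ x a b) → (∀ a b, x a b ≠ 0 → E a b) →
    (∀ a, ∑ b, x a b = wA a) → (∀ b, ∑ a, x a b = wB b) →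
    ((univ.filter fun q : A × B => x q.1 q.2 ≠ 0).card ≤ n) →
    ∃ x' : A → B → ℝ, (∀ a b, 0 ≤ x' a b) ∧ (∀ a b, x' a b ≠ 0 → E a b) ∧
      (∀ a, ∑ b, x' a b = wA a) ∧ (∀ b, ∑ a, x' a b = wB b) ∧
      (toGraph fun a b => x' a b ≠ 0).IsAcyclic := by
  intro n
  induction n with
  | zero =>
    intro x hxnn hxE hrow hcol hcard
    by_cases hac : (toGraph fun a b => x a b ≠ 0).IsAcyclic
    · exact ⟨x, hxnn, hxE, hrow, hcol, hac⟩
    · exfalso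
      unfold SimpleGraph.IsAcyclic at hac
      push_neg at hac
      obtain ⟨v, c, hcyc⟩ := hac
      cases c with
      | nil => exact hcyc.ne_nil rfl
      | cons h p =>
        rcases toGraph_adj h with ⟨a1, b1, _, _, hF⟩ | ⟨a1, b1, _, _, hF⟩ <;>
        · have : (a1, b1) ∈ univ.filter fun q : A × B => x q.1 q.2 ≠ 0 :=
            mem_filter.2 ⟨mem_univ _, hF⟩
          have := Finset.card_pos.2 ⟨(a1, b1), this⟩
          omega
  | succ n ih =>
    intro x hxnn hxE hrow hcol hcard
    by_cases hac : (toGraph fun a b => x a b ≠ 0).IsAcyclic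
    · exact ⟨x, hxnn, hxE, hrow, hcol, hac⟩
    unfold SimpleGraph.IsAcyclic at hac
    push_neg at hac
    obtain ⟨v, c, hcyc⟩ := hac
    cases c with
    | nil => exact absurd rfl hcyc.ne_nil
    | @cons _ w _ h p =>
      have hedge : s(v, w) ∉ p.edges :=
        ((SimpleGraph.Walk.cons_isCycle_iff p h).1 hcyc).2
      set z : A → B → ℝ := zWalk (SimpleGraph.Walk.cons h p) with hzdef
      have hzrow : ∀ a, ∑ b, z a b = 0 := by
        intro a; rw [hzdef, zWalk_row]; ring
      have hzcol : ∀ b, ∑ a, z a b = 0 := by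
        intro b; rw [hzdef, zWalk_col]; ring
      have hzsupp : ∀ a b, z a b ≠ 0 → x a b ≠ 0 := by
        intro a b hz
        exact zWalk_supp _ a b hz
      -- the first edge of the cycle gives a nonzero entry of z
      have hz1 : ∃ a b, z a b ≠ 0 := by
        rcases toGraph_adj h with ⟨a1, b1, hv, hw, hF⟩ | ⟨a1, b1, hv, hw, hF⟩
        · refine ⟨a1, b1, ?_⟩
          subst hv; subst hw
          have hzval : z a1 b1 = edgeVec (Sum.inl a1) (Sum.inr b1) a1 b1 + zWalk p a1 b1 := rfl
          rw [hzval, zWalk_notMem p a1 b1 hedge]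
          simp [edgeVec]
        · refine ⟨a1, b1, ?_⟩
          subst hv; subst hw
          have hzval : z a1 b1 = edgeVec (Sum.inr b1) (Sum.inl a1) a1 b1 + zWalk p a1 b1 := rfl
          rw [Sym2.eq_swap] at hedge
          rw [hzval, zWalk_notMem p a1 b1 hedge]
          simp [edgeVec]
      obtain ⟨a1, b1, hz1⟩ := hz1
      have hneg : ∃ q : A × B, z q.1 q.2 < 0 := by
        by_contra hno
        push_neg at hno
        have h1 : 0 < z a1 b1 := lt_of_le_of_ne (hno (a1, b1)) (Ne.symm hz1)
        have h2 : z a1 b1 ≤ ∑ b, z a1 b :=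
          Finset.single_le_sum (fun b _ => hno (a1, b)) (mem_univ b1)
        rw [hzrow a1] at h2
        linarith
      obtain ⟨qn, hqneg⟩ := hneg
      set D : Finset (A × B) := univ.filter (fun q => z q.1 q.2 < 0) with hDdef
      have hDne : D.Nonempty := ⟨qn, mem_filter.2 ⟨mem_univ _, hqneg⟩⟩
      set R : Finset ℝ := D.image (fun q => x q.1 q.2 / (- z q.1 q.2)) with hRdef
      have hRne : R.Nonempty := hDne.image _
      set t : ℝ := R.min' hRne with htdef
      obtain ⟨qs, hqsD, hqs⟩ := mem_image.1 (R.min'_mem hRne)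
      have hqszneg : z qs.1 qs.2 < 0 := (mem_filter.1 hqsD).2
      have hqszne : z qs.1 qs.2 ≠ 0 := ne_of_lt hqszneg
      have hqsx : 0 < x qs.1 qs.2 :=
        lt_of_le_of_ne (hxnn _ _) (Ne.symm (hzsupp _ _ hqszne))
      have htpos : 0 < t := by
        rw [htdef, ← hqs]
        exact div_pos hqsx (by linarith)
      have htle : ∀ a b, z a b < 0 → t * (- z a b) ≤ x a b := by
        intro a b hzb
        have hmem : (x a b / (- z a b)) ∈ R := by
          rw [hRdef]
          exact mem_image_of_mem _ (mem_filter.2 ⟨mem_univ (a, b), hzb⟩)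
        have hle := R.min'_le _ hmem
        rw [← htdef] at hle
        have hzpos : (0:ℝ) < - z a b := by linarith
        calc t * (- z a b) ≤ (x a b / (- z a b)) * (- z a b) :=
              mul_le_mul_of_nonneg_right hle hzpos.le
          _ = x a b := div_mul_cancel₀ _ (ne_of_gt hzpos)
      set x2 : A → B → ℝ := fun a b => x a b + t * z a b with hx2def
      have hx2nn : ∀ a b, 0 ≤ x2 a b := by
        intro a b
        show 0 ≤ x a b + t * z a b
        by_cases hzb : z a b < 0
        · have h1 := htle a b hzb
          have h2 : t * z a b = -(t * (- z a b)) := by ring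
          linarith
        · have := mul_nonneg htpos.le (not_lt.1 hzb)
          have := hxnn a b
          linarith
      have hx2supp : ∀ a b, x2 a b ≠ 0 → x a b ≠ 0 := by
        intro a b hx2
        by_contra hx0
        have hx0' : x a b = 0 := hx0
        have hz0 : z a b = 0 := by
          by_contra hzne
          exact (hzsupp a b hzne) hx0'
        apply hx2
        show x a b + t * z a b = 0
        rw [hx0', hz0]; ring
      have hx2E : ∀ a b, x2 a b ≠ 0 → E a b := fun a b hx2 => hxE a b (hx2supp a b hx2)
      have hx2row : ∀ a, ∑ b, x2 a b = wA a := by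
        intro a
        show ∑ b, (x a b + t * z a b) = wA a
        rw [Finset.sum_add_distrib, ← Finset.mul_sum, hzrow a, hrow a]
        ring
      have hx2col : ∀ b, ∑ a, x2 a b = wB b := by
        intro b
        show ∑ a, (x a b + t * z a b) = wB b
        rw [Finset.sum_add_distrib, ← Finset.mul_sum, hzcol b, hcol b]
        ring
      have hqs0 : x2 qs.1 qs.2 = 0 := by
        show x qs.1 qs.2 + t * z qs.1 qs.2 = 0
        have hzne' : -z qs.1 qs.2 ≠ 0 := neg_ne_zero.2 hqszne
        have h1 : t * -z qs.1 qs.2 = x qs.1 qs.2 := by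
          rw [htdef, ← hqs]
          exact div_mul_cancel₀ _ hzne'
        have h2 : t * z qs.1 qs.2 = - (t * -z qs.1 qs.2) := by ring
        rw [h2, h1]; ring
      have hsub : (univ.filter fun q : A × B => x2 q.1 q.2 ≠ 0)
          ⊆ (univ.filter fun q : A × B => x q.1 q.2 ≠ 0) := by
        intro q hq
        simp only [mem_filter, mem_univ, true_and] at hq ⊢
        exact hx2supp q.1 q.2 hq
      have hlt : (univ.filter fun q : A × B => x2 q.1 q.2 ≠ 0).card
          < (univ.filter fun q : A × B => x q.1 q.2 ≠ 0).card := by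
        apply Finset.card_lt_card
        refine ⟨hsub, fun hsup => ?_⟩
        have hqsmem : qs ∈ univ.filter fun q : A × B => x q.1 q.2 ≠ 0 :=
          mem_filter.2 ⟨mem_univ _, ne_of_gt hqsx⟩
        have := hsup hqsmem
        simp only [mem_filter, mem_univ, true_and] at this
        exact this hqs0
      exact ih x2 hx2nn hx2E hx2row hx2col (by omega)

end Subforest

/-- The subforest lemma. -/
theorem stmt1 {A B : Type*} [Fintype A] [Fintype B]
    (E : A → B → Prop) (wA : A → ℝ) (wB : B → ℝ)
    (hwA : ∀ a, 0 ≤ wA a) (hwB : ∀ b, 0 ≤ wB b)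
    (hAB : ∑ a, wA a = ∑ b, wB b)
    (hall : ∀ U : Finset A, ∑ a ∈ U, wA a ≤
      ∑ b ∈ univ.filter (fun b => ∃ a ∈ U, E a b), wB b) :
    ∃ F : A → B → Prop, (∀ a b, F a b → E a b) ∧ (toGraph F).IsAcyclic ∧
      ∀ U : Finset A, ∑ a ∈ U, wA a ≤
        ∑ b ∈ univ.filter (fun b => ∃ a ∈ U, F a b), wB b := by
  have hallS : ∀ U : Finset A, 0 ≤ Subforest.slack E wA wB U := by
    intro U
    have h := hall U
    simp only [Subforest.slack, Subforest.nbhd]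
    linarith
  obtain ⟨x, hxnn, hxE, hrow, hcol⟩ :=
    Subforest.feas E _ wA wB hwA hwB hAB hallS (le_refl _)
  obtain ⟨x', h1, h2, h3, h4, h5⟩ :=
    Subforest.acyc E wA wB _ x hxnn hxE hrow hcol (le_refl _)
  refine ⟨fun a b => x' a b ≠ 0, fun a b h => h2 a b h, h5, ?_⟩
  intro U
  have key : ∑ a ∈ U, wA a ≤ ∑ b ∈ univ.filter (fun b => ∃ a ∈ U, x' a b ≠ 0), wB b := by
    have hrw : ∑ a ∈ U, wA a = ∑ a ∈ U, ∑ b, x' a b := by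
      apply Finset.sum_congr rfl
      intro a _
      exact (h3 a).symm
    rw [hrw, Finset.sum_comm]
    have hzero : ∀ b ∈ (univ : Finset B),
        b ∉ univ.filter (fun b => ∃ a ∈ U, x' a b ≠ 0) → ∑ a ∈ U, x' a b = 0 := by
      intro b _ hb
      simp only [mem_filter, mem_univ, true_and] at hb
      push_neg at hb
      apply Finset.sum_eq_zero
      intro a ha
      exact hb a ha
    rw [← Finset.sum_subset (Finset.subset_univ _) hzero]
    apply Finset.sum_le_sum
    intro b hb
    have hle : ∑ a ∈ U, x' a b ≤ ∑ a, x' a b :=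
      Finset.sum_le_sum_of_subset_of_nonneg (subset_univ U) (fun a _ _ => h1 a b)
    rw [h4 b] at hle
    exact hle
  convert key using 3
end

section
/- Let A and B be finite sets, R ⊆ A × B, P and P' probability measures on A and B, and ε ≥ 0. Then there exists a coupling Q of P and P' with Q(R) ≥ 1 − ε if and only if P(U) ≤ P'(N_R(U)) + ε for all U ⊆ A. -/
/-!
Necessity: a coupling `Q` puts mass `P(U)` on `U × B`, and the part of it inside `R` lies in
`A × N_R(U)`, so `P(U) ≤ P'(N_R(U)) + Q(Rᶜ)`.

Sufficiency is max-flow/min-cut. By compactness there is a sub-coupling `Q` supported on `R` of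
maximal total mass. Let `U` be the set of rows reachable from a row with `Q`-mass below `P` by
alternating paths, which go forward along `R` and backward along the support of `Q`. Every column
so reached is saturated, since otherwise pushing a little mass along the path would increase the
total. Hence `Q` has mass exactly `P(Uᶜ) + P'(N_R(U)) ≥ 1 - ε`. The missing row and column masses
are equal and are added back as a product measure, which only increases `Q`.
-/

open Finset Filter Topology
open scoped Classical

lemma sum_pi_single_row {A B M : Type*} [Fintype B] [AddCommMonoid M] (a a' : A) (b : B) (c : M) :
    ∑ b', (Pi.single (a, b) c : A × B → M) (a', b') = (Pi.single a c : A → M) a' := by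
  rcases eq_or_ne a' a with rfl | h
  · simp [Pi.single_apply, Prod.ext_iff]
  · simp [Prod.ext_iff, h]

lemma sum_pi_single_col {A B M : Type*} [Fintype A] [AddCommMonoid M] (a : A) (b b' : B) (c : M) :
    ∑ a', (Pi.single (a, b) c : A × B → M) (a', b') = (Pi.single b c : B → M) b' := by
  rcases eq_or_ne b' b with rfl | h
  · simp [Pi.single_apply, Prod.ext_iff]
  · simp [Prod.ext_iff, h]

section

variable {A B : Type*} [Fintype A] [Fintype B]

noncomputable def nbhd (R : A → B → Prop) (U : Finset A) : Finset B :=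
  univ.filter fun b => ∃ a ∈ U, R a b

structure IsSubcoupling (P : A → ℝ) (P' : B → ℝ) (Q : A × B → ℝ) : Prop where
  nonneg : ∀ p, 0 ≤ Q p
  row_le : ∀ a, ∑ b, Q (a, b) ≤ P a
  col_le : ∀ b, ∑ a, Q (a, b) ≤ P' b

def subcouplingsOn (P : A → ℝ) (P' : B → ℝ) (R : A → B → Prop) : Set (A × B → ℝ) :=
  {Q | IsSubcoupling P P' Q ∧ ∀ p, ¬ R p.1 p.2 → Q p = 0}

lemma sum_le_sum_nbhd_add_sum_filter_not {P : A → ℝ} {P' : B → ℝ} {Q : A × B → ℝ}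
    (R : A → B → Prop) (hQ : ∀ p, 0 ≤ Q p) (hrow : ∀ a, ∑ b, Q (a, b) = P a)
    (hcol : ∀ b, ∑ a, Q (a, b) = P' b) (U : Finset A) :
    ∑ a ∈ U, P a ≤
      ∑ b ∈ nbhd R U, P' b + ∑ p ∈ univ.filter (fun p : A × B => ¬ R p.1 p.2), Q p := by
  have hR : (U ×ˢ univ).filter (fun p : A × B => R p.1 p.2) ⊆ univ ×ˢ nbhd R U := by
    intro p hp
    simp only [mem_filter, mem_product] at hp
    simpa [nbhd] using ⟨p.1, hp.1.1, hp.2⟩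
  have hnR : (U ×ˢ univ).filter (fun p : A × B => ¬ R p.1 p.2) ⊆
      univ.filter (fun p : A × B => ¬ R p.1 p.2) :=
    filter_subset_filter _ (subset_univ _)
  calc ∑ a ∈ U, P a = ∑ p ∈ U ×ˢ univ, Q p := by simp [sum_product, hrow]
    _ = ∑ p ∈ (U ×ˢ univ).filter (fun p : A × B => R p.1 p.2), Q p +
        ∑ p ∈ (U ×ˢ univ).filter (fun p : A × B => ¬ R p.1 p.2), Q p :=
      (sum_filter_add_sum_filter_not _ _ _).symm
    _ ≤ ∑ p ∈ univ ×ˢ nbhd R U, Q p + ∑ p ∈ univ.filter (fun p : A × B => ¬ R p.1 p.2), Q p :=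
      add_le_add (sum_le_sum_of_subset_of_nonneg hR fun p _ _ => hQ p)
        (sum_le_sum_of_subset_of_nonneg hnR fun p _ _ => hQ p)
    _ = _ := by simp [sum_product_right, hcol]

lemma mul_sum_div_sum_of_nonneg {ι : Type*} [Fintype ι] {f : ι → ℝ} (hf : ∀ i, 0 ≤ f i)
    (i : ι) : f i * (∑ j, f j) / ∑ j, f j = f i := by
  rcases eq_or_ne (∑ j, f j) 0 with h | h
  · simp [(sum_eq_zero_iff_of_nonneg fun j _ => hf j).1 h i (mem_univ i)]
  · exact mul_div_cancel_right₀ _ h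

lemma IsSubcoupling.exists_coupling_ge {P : A → ℝ} {P' : B → ℝ} {Q : A × B → ℝ}
    (hQ : IsSubcoupling P P' Q) (hsum : ∑ a, P a = ∑ b, P' b) :
    ∃ Q' : A × B → ℝ, (∀ p, Q p ≤ Q' p) ∧
      (∀ a, ∑ b, Q' (a, b) = P a) ∧ (∀ b, ∑ a, Q' (a, b) = P' b) := by
  set r : A → ℝ := fun a => P a - ∑ b, Q (a, b)
  set r' : B → ℝ := fun b => P' b - ∑ a, Q (a, b)
  have hr : ∀ a, 0 ≤ r a := fun a => sub_nonneg.2 (hQ.row_le a)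
  have hr' : ∀ b, 0 ≤ r' b := fun b => sub_nonneg.2 (hQ.col_le b)
  have hs : ∑ b, r' b = ∑ a, r a := by
    simp only [r, r', sum_sub_distrib, hsum, sum_comm (γ := A)]
  refine ⟨fun p => Q p + r p.1 * r' p.2 / ∑ a, r a, fun p => ?_, fun a => ?_, fun b => ?_⟩
  · have := div_nonneg (mul_nonneg (hr p.1) (hr' p.2)) (sum_nonneg fun a (_ : a ∈ univ) => hr a)
    linarith
  · simp only [sum_add_distrib, ← sum_div, ← mul_sum, hs, mul_sum_div_sum_of_nonneg hr, r]
    ring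
  · simp only [sum_add_distrib, ← sum_div, ← sum_mul]
    rw [← hs, mul_comm, mul_sum_div_sum_of_nonneg hr']
    simp only [r']
    ring

inductive ResidualReach (P : A → ℝ) (R : A → B → Prop) (Q : A × B → ℝ) : A ⊕ B → Prop
  | base (a : A) : ∑ b, Q (a, b) < P a → ResidualReach P R Q (.inl a)
  | fwd (a : A) (b : B) : ResidualReach P R Q (.inl a) → R a b → ResidualReach P R Q (.inr b)
  | back (a : A) (b : B) : ResidualReach P R Q (.inr b) → 0 < Q (a, b) →
      ResidualReach P R Q (.inl a)

-- For small `t > 0`, `Q + t • D` is nonnegative, vanishes off `R` and respects the row bounds.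
structure IsFeasibleDirection (P : A → ℝ) (R : A → B → Prop) (Q D : A × B → ℝ) : Prop where
  support : ∀ p, ¬ R p.1 p.2 → D p = 0
  pos_of_neg : ∀ p, D p < 0 → 0 < Q p
  row : ∀ a, ∑ b, Q (a, b) < P a ∨ ∑ b, D (a, b) ≤ 0

-- Reaching row `a` gives a direction freeing a unit of row `a` without changing any column;
-- reaching column `b` gives one adding a unit to column `b` only.
lemma ResidualReach.exists_feasibleDirection {P : A → ℝ} {R : A → B → Prop} {Q : A × B → ℝ}
    (hQR : ∀ p, ¬ R p.1 p.2 → Q p = 0) {x : A ⊕ B} (hx : ResidualReach P R Q x) :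
    ∃ D, IsFeasibleDirection P R Q D ∧
      x.elim (fun a => (∑ b, Q (a, b) < P a ∨ ∑ b, D (a, b) ≤ -1) ∧ ∀ b, ∑ a', D (a', b) = 0)
        (fun b => ∀ b', ∑ a, D (a, b') = (Pi.single b 1 : B → ℝ) b') := by
  induction hx with
  | base a ha => exact ⟨0, ⟨by simp, by simp, by simp⟩, .inl ha, by simp⟩
  | fwd a b _ hab ih =>
    obtain ⟨D, hD, hDa, hDcol⟩ := ih
    have hrow (a' : A) : ∑ b', (D + Pi.single (a, b) 1 : A × B → ℝ) (a', b') =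
        ∑ b', D (a', b') + (Pi.single a 1 : A → ℝ) a' := by
      simp [sum_add_distrib, sum_pi_single_row]
    refine ⟨D + Pi.single (a, b) 1, ⟨fun p hp => ?_, fun p hp => ?_, fun a' => ?_⟩, fun b' => ?_⟩
    · rcases eq_or_ne p (a, b) with rfl | hne
      · exact absurd hab hp
      · simp [hne, hD.support p hp]
    · have : 0 ≤ (Pi.single (a, b) 1 : A × B → ℝ) p := by
        rw [Pi.single_apply]; positivity
      exact hD.pos_of_neg p (by simp only [Pi.add_apply] at hp; linarith)
    · rw [hrow]
      rcases eq_or_ne a' a with rfl | hne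
      · rcases hDa with h | h
        · exact .inl h
        · exact .inr (by rw [Pi.single_eq_same]; linarith)
      · simpa [hne] using hD.row a'
    · simp [sum_add_distrib, hDcol, sum_pi_single_col]
  | back a b _ hab ih =>
    obtain ⟨D, hD, hDcol⟩ := ih
    have hrow (a' : A) : ∑ b', (D - Pi.single (a, b) 1 : A × B → ℝ) (a', b') =
        ∑ b', D (a', b') - (Pi.single a 1 : A → ℝ) a' := by
      simp [sum_sub_distrib, sum_pi_single_row]
    refine ⟨D - Pi.single (a, b) 1, ⟨fun p hp => ?_, fun p hp => ?_, fun a' => ?_⟩, ?_,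
      fun b' => ?_⟩
    · rcases eq_or_ne p (a, b) with rfl | hne
      · exact absurd (hQR _ hp) hab.ne'
      · simp [hne, hD.support p hp]
    · rcases eq_or_ne p (a, b) with rfl | hne
      · exact hab
      · exact hD.pos_of_neg p (by simpa [hne] using hp)
    · rw [hrow]
      rcases eq_or_ne a' a with rfl | hne
      · exact (hD.row a').imp_right fun h => by rw [Pi.single_eq_same]; linarith
      · simpa [hne] using hD.row a'
    · rw [hrow]
      exact (hD.row a).imp_right fun h => by rw [Pi.single_eq_same]; linarith
    · simp [sum_sub_distrib, hDcol b', sum_pi_single_col]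

lemma eventually_nonneg_add_mul {c d : ℝ} (hc : 0 ≤ c) (h : 0 < c ∨ 0 ≤ d) :
    ∀ᶠ t in 𝓝[>] 0, 0 ≤ c + t * d := by
  rcases h with hc | hd
  · have : Tendsto (fun t => c + t * d) (𝓝[>] 0) (𝓝 c) :=
      tendsto_nhdsWithin_of_tendsto_nhds (Continuous.tendsto' (by fun_prop) _ _ (by simp))
    exact (this.eventually (lt_mem_nhds hc)).mono fun t ht => ht.le
  · exact eventually_nhdsWithin_of_forall fun t (ht : 0 < t) => by positivity

lemma ResidualReach.col_eq_of_isMaxOn {P : A → ℝ} {P' : B → ℝ} {R : A → B → Prop}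
    {Q : A × B → ℝ} (hQ : Q ∈ subcouplingsOn P P' R)
    (hmax : IsMaxOn (fun Q => ∑ p, Q p) (subcouplingsOn P P' R) Q) {b : B}
    (hb : ResidualReach P R Q (.inr b)) : ∑ a, Q (a, b) = P' b := by
  obtain ⟨D, hD, hDcol⟩ := hb.exists_feasibleDirection hQ.2
  simp only [Sum.elim_inr] at hDcol
  by_contra hne
  have hlt := lt_of_le_of_ne (hQ.1.col_le b) hne
  have hnonneg : ∀ᶠ t in 𝓝[>] (0 : ℝ), ∀ p, 0 ≤ Q p + t * D p :=
    eventually_all.2 fun p => eventually_nonneg_add_mul (hQ.1.nonneg p)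
      ((lt_or_ge (D p) 0).imp (hD.pos_of_neg p) id)
  have hrow : ∀ᶠ t in 𝓝[>] (0 : ℝ), ∀ a,
      0 ≤ (P a - ∑ b, Q (a, b)) + t * -∑ b, D (a, b) :=
    eventually_all.2 fun a => eventually_nonneg_add_mul (sub_nonneg.2 (hQ.1.row_le a))
      ((hD.row a).imp sub_pos.2 neg_nonneg.2)
  have hcol : ∀ᶠ t in 𝓝[>] (0 : ℝ), ∀ b',
      0 ≤ (P' b' - ∑ a, Q (a, b')) + t * -∑ a, D (a, b') := by
    refine eventually_all.2 fun b' => eventually_nonneg_add_mul (sub_nonneg.2 (hQ.1.col_le b')) ?_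
    rcases eq_or_ne b' b with rfl | hne
    · exact .inl (sub_pos.2 hlt)
    · exact .inr (by simp [hDcol, hne])
  have hev : ∀ᶠ t in 𝓝[>] (0 : ℝ), Q + t • D ∈ subcouplingsOn P P' R := by
    filter_upwards [hnonneg, hrow, hcol] with t h1 h2 h3
    refine ⟨⟨fun p => by simpa using h1 p, fun a => ?_, fun b' => ?_⟩,
      fun p hp => by simp [hQ.2 p hp, hD.support p hp]⟩
    · simp only [Pi.add_apply, Pi.smul_apply, smul_eq_mul, sum_add_distrib, ← mul_sum]
      linarith [h2 a]
    · simp only [Pi.add_apply, Pi.smul_apply, smul_eq_mul, sum_add_distrib, ← mul_sum]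
      linarith [h3 b']
  obtain ⟨t, hmem, ht⟩ := (hev.and self_mem_nhdsWithin).exists
  have : ∑ p, (Q + t • D) p = ∑ p, Q p + t := by
    simp [sum_add_distrib, ← mul_sum, Fintype.sum_prod_type_right, hDcol]
  linarith [isMaxOn_iff.1 hmax _ hmem, show 0 < t from ht]

lemma isCompact_subcouplingsOn {P : A → ℝ} {P' : B → ℝ} (R : A → B → Prop) :
    IsCompact (subcouplingsOn P P' R) := by
  have hclosed : IsClosed (subcouplingsOn P P' R) := by
    have : subcouplingsOn P P' R = (⋂ p, {Q | 0 ≤ Q p}) ∩ (⋂ a, {Q | ∑ b, Q (a, b) ≤ P a}) ∩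
        (⋂ b, {Q | ∑ a, Q (a, b) ≤ P' b}) ∩ ⋂ p, ⋂ (_ : ¬ R p.1 p.2), {Q | Q p = 0} := by
      ext Q
      simp only [subcouplingsOn, Set.mem_ofPred_eq, Set.mem_inter_iff, Set.mem_iInter]
      exact ⟨fun ⟨⟨h1, h2, h3⟩, h4⟩ => ⟨⟨⟨h1, h2⟩, h3⟩, h4⟩,
        fun ⟨⟨⟨h1, h2⟩, h3⟩, h4⟩ => ⟨⟨h1, h2, h3⟩, h4⟩⟩
    rw [this]
    refine .inter (.inter (.inter ?_ ?_) ?_) ?_ <;>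
      refine isClosed_iInter fun _ => ?_
    · exact isClosed_le continuous_const (continuous_apply _)
    · exact isClosed_le (by fun_prop) continuous_const
    · exact isClosed_le (by fun_prop) continuous_const
    · exact isClosed_iInter fun _ => isClosed_eq (continuous_apply _) continuous_const
  refine (isCompact_univ_pi fun p : A × B => isCompact_Icc (a := 0) (b := P p.1))
    |>.of_isClosed_subset hclosed fun Q hQ p _ => ⟨hQ.1.nonneg p, ?_⟩
  calc Q p ≤ ∑ b, Q (p.1, b) := single_le_sum (f := fun b => Q (p.1, b))
        (fun b _ => hQ.1.nonneg _) (mem_univ p.2)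
    _ ≤ P p.1 := hQ.1.row_le p.1

lemma sum_row_eq_sum_col_of_forall_ne_zero {Q : A × B → ℝ} {U : Finset A} {V : Finset B}
    (h : ∀ a b, Q (a, b) ≠ 0 → (a ∈ U ↔ b ∈ V)) :
    ∑ a ∈ U, ∑ b, Q (a, b) = ∑ b ∈ V, ∑ a, Q (a, b) := by
  calc ∑ a ∈ U, ∑ b, Q (a, b) = ∑ a ∈ U, ∑ b ∈ V, Q (a, b) :=
        sum_congr rfl fun a ha => (sum_subset (subset_univ V) fun b _ hb =>
          by_contra fun hQ => hb ((h a b hQ).1 ha)).symm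
    _ = ∑ b ∈ V, ∑ a ∈ U, Q (a, b) := sum_comm
    _ = ∑ b ∈ V, ∑ a, Q (a, b) :=
        sum_congr rfl fun b hb => sum_subset (subset_univ U) fun a _ ha =>
          by_contra fun hQ => ha ((h a b hQ).2 hb)

theorem exists_mem_subcouplingsOn_sum_eq {P : A → ℝ} {P' : B → ℝ} (hP : ∀ a, 0 ≤ P a)
    (hP' : ∀ b, 0 ≤ P' b) (R : A → B → Prop) :
    ∃ Q ∈ subcouplingsOn P P' R, ∃ U : Finset A,
      ∑ p, Q p = ∑ a ∈ Uᶜ, P a + ∑ b ∈ nbhd R U, P' b := by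
  have h0 : (0 : A × B → ℝ) ∈ subcouplingsOn P P' R :=
    ⟨⟨fun _ => le_rfl, by simpa using hP, by simpa using hP'⟩, fun _ _ => rfl⟩
  obtain ⟨Q, hQ, hmax⟩ := (isCompact_subcouplingsOn R).exists_isMaxOn ⟨0, h0⟩
    (f := fun Q : A × B → ℝ => ∑ p, Q p) (by fun_prop)
  set U := univ.filter fun a => ResidualReach P R Q (.inl a)
  have hreach (b : B) (hb : b ∈ nbhd R U) : ResidualReach P R Q (.inr b) := by
    obtain ⟨a, ha, hab⟩ := (mem_filter.1 hb).2
    exact .fwd a b (mem_filter.1 ha).2 hab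
  have hrow (a : A) (ha : a ∈ Uᶜ) : ∑ b, Q (a, b) = P a := by
    by_contra hne
    exact (by simpa [U] using ha : ¬ _) (ResidualReach.base a (lt_of_le_of_ne (hQ.1.row_le a) hne))
  have hcut (a : A) (b : B) (hab : Q (a, b) ≠ 0) : a ∈ U ↔ b ∈ nbhd R U :=
    ⟨fun ha => mem_filter.2 ⟨mem_univ b, a, ha, by_contra fun hR => hab (hQ.2 (a, b) hR)⟩,
      fun hb => mem_filter.2
        ⟨mem_univ a, .back a b (hreach b hb) ((hQ.1.nonneg _).lt_of_ne' hab)⟩⟩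
  refine ⟨Q, hQ, U, ?_⟩
  rw [Fintype.sum_prod_type, ← sum_compl_add_sum U, sum_congr rfl hrow,
    sum_row_eq_sum_col_of_forall_ne_zero hcut,
    sum_congr rfl fun b hb => (hreach b hb).col_eq_of_isMaxOn hQ hmax]

end

theorem stmt5_general {A B : Type*} [Fintype A] [Fintype B]
    (P : A → ℝ) (P' : B → ℝ) (R : A → B → Prop) (ε : ℝ)
    (hP0 : ∀ a, 0 ≤ P a) (hP1 : ∑ a, P a = 1)
    (hP'0 : ∀ b, 0 ≤ P' b) (hP'1 : ∑ b, P' b = 1) :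
    (∃ Q : A × B → ℝ, (∀ p, 0 ≤ Q p) ∧
        (∀ a, ∑ b, Q (a, b) = P a) ∧ (∀ b, ∑ a, Q (a, b) = P' b) ∧
        1 - ε ≤ ∑ p ∈ univ.filter (fun p : A × B => R p.1 p.2), Q p) ↔
      ∀ U : Finset A, ∑ a ∈ U, P a ≤
        (∑ b ∈ univ.filter (fun b => ∃ a ∈ U, R a b), P' b) + ε := by
  constructor
  · rintro ⟨Q, hQ, hrow, hcol, hmass⟩ U
    have htotal : ∑ p, Q p = 1 := by rw [Fintype.sum_prod_type]; simp only [hrow, hP1]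
    rw [← sum_filter_add_sum_filter_not univ (fun p : A × B => R p.1 p.2)] at htotal
    have := sum_le_sum_nbhd_add_sum_filter_not R hQ hrow hcol U
    rw [nbhd] at this
    linarith
  · intro hU
    obtain ⟨Q, hQ, U, hcut⟩ := exists_mem_subcouplingsOn_sum_eq hP0 hP'0 R
    obtain ⟨Q', hle, hrow, hcol⟩ := hQ.1.exists_coupling_ge (hP1.trans hP'1.symm)
    refine ⟨Q', fun p => (hQ.1.nonneg p).trans (hle p), hrow, hcol, ?_⟩
    calc 1 - ε = ∑ a ∈ Uᶜ, P a + ∑ a ∈ U, P a - ε := by rw [sum_compl_add_sum, hP1]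
      _ ≤ ∑ p, Q p := by rw [hcut, nbhd]; linarith [hU U]
      _ = ∑ p ∈ univ.filter (fun p : A × B => R p.1 p.2), Q p :=
        (sum_filter_of_ne fun p _ hp => by_contra fun hR => hp (hQ.2 p hR)).symm
      _ ≤ ∑ p ∈ univ.filter (fun p : A × B => R p.1 p.2), Q' p := sum_le_sum fun p _ => hle p

/-- Strassen's theorem with deficiency. -/
theorem stmt5 {A B : Type*} [Fintype A] [Fintype B]
    (P : A → ℝ) (P' : B → ℝ) (R : A → B → Prop) (ε : ℝ) (hε : 0 ≤ ε)
    (hP0 : ∀ a, 0 ≤ P a) (hP1 : ∑ a, P a = 1)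
    (hP'0 : ∀ b, 0 ≤ P' b) (hP'1 : ∑ b, P' b = 1) :
    (∃ Q : A × B → ℝ, (∀ p, 0 ≤ Q p) ∧
        (∀ a, ∑ b, Q (a, b) = P a) ∧ (∀ b, ∑ a, Q (a, b) = P' b) ∧
        1 - ε ≤ ∑ p ∈ univ.filter (fun p : A × B => R p.1 p.2), Q p) ↔
      ∀ U : Finset A, ∑ a ∈ U, P a ≤
        (∑ b ∈ univ.filter (fun b => ∃ a ∈ U, R a b), P' b) + ε :=
  stmt5_general P P' R ε hP0 hP1 hP'0 hP'1
end

section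
/- Let A and B be finite sets with probability measures P and P', and R ⊆ A × B. If P(U) ≤ P'(N_R(U)) + ε for all U ⊆ A where ε ≥ 0 is real, then there exist sequences of rational-valued probability measures P_i on A, P'_i on B, and rationals ε_i ↓ ε, with P_i → P, P'_i → P' pointwise, such that for each i, P_i(U) ≤ P'_i(N_R(U)) + ε_i for all U ⊆ A. -/
/-!
Round every mass of `P` and `P'` down to a multiple of `2⁻ⁱ` and give the lost mass, at most
`|A| / 2ⁱ` (resp. `|B| / 2ⁱ`), to one fixed point. The resulting rational probability vectors
have every set mass within `|A| / 2ⁱ` (resp. `|B| / 2ⁱ`) of the original, so the deficiency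
condition survives with slack `ε + (|A| + |B|) / 2ⁱ`, which is then rounded up to a dyadic
rational.
-/

open Finset Filter Topology
open scoped Classical

noncomputable section

def dyadicFloor (x : ℝ) (i : ℕ) : ℚ := ⌊x * 2 ^ i⌋ / 2 ^ i

def dyadicCeil (x : ℝ) (i : ℕ) : ℚ := ⌈x * 2 ^ i⌉ / 2 ^ i

section Dyadic

variable (x : ℝ) (i : ℕ)

lemma dyadicFloor_le : (dyadicFloor x i : ℝ) ≤ x := by
  rw [dyadicFloor, Rat.cast_div, div_le_iff₀ (by positivity)]
  exact_mod_cast Int.floor_le _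

lemma sub_le_dyadicFloor : x - 1 / 2 ^ i ≤ dyadicFloor x i := by
  have h : (x - 1 / 2 ^ i) * 2 ^ i = x * 2 ^ i - 1 := by field_simp
  rw [dyadicFloor, Rat.cast_div, le_div_iff₀ (by positivity)]
  push_cast
  linarith [Int.sub_one_lt_floor (x * 2 ^ i)]

lemma dyadicFloor_nonneg {x : ℝ} (hx : 0 ≤ x) : 0 ≤ dyadicFloor x i :=
  div_nonneg (by exact_mod_cast Int.floor_nonneg.2 (by positivity)) (by positivity)

lemma le_dyadicCeil : x ≤ dyadicCeil x i := by
  rw [dyadicCeil, Rat.cast_div, le_div_iff₀ (by positivity)]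
  exact_mod_cast Int.le_ceil _

lemma dyadicCeil_le : (dyadicCeil x i : ℝ) ≤ x + 1 / 2 ^ i := by
  have h : (x + 1 / 2 ^ i) * 2 ^ i = x * 2 ^ i + 1 := by field_simp
  rw [dyadicCeil, Rat.cast_div, div_le_iff₀ (by positivity)]
  push_cast
  linarith [Int.ceil_lt_add_one (x * 2 ^ i)]

lemma dyadicCeil_succ_le : dyadicCeil x (i + 1) ≤ dyadicCeil x i := by
  have h : ⌈x * 2 ^ (i + 1)⌉ ≤ ⌈x * 2 ^ i⌉ * 2 := by
    rw [Int.ceil_le, pow_succ, ← mul_assoc]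
    push_cast
    exact mul_le_mul_of_nonneg_right (Int.le_ceil _) zero_le_two
  rw [dyadicCeil, dyadicCeil, div_le_div_iff₀ (by positivity) (by positivity)]
  calc (⌈x * 2 ^ (i + 1)⌉ : ℚ) * 2 ^ i ≤ (⌈x * 2 ^ i⌉ * 2 : ℤ) * 2 ^ i :=
        mul_le_mul_of_nonneg_right (by exact_mod_cast h) (by positivity)
    _ = ⌈x * 2 ^ i⌉ * 2 ^ (i + 1) := by push_cast; ring

end Dyadic

lemma tendsto_of_abs_sub_le_div_two_pow {u : ℕ → ℝ} {x c : ℝ} (h : ∀ i, |u i - x| ≤ c / 2 ^ i) :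
    Tendsto u atTop (𝓝 x) :=
  tendsto_iff_norm_sub_tendsto_zero.2 <| squeeze_zero (fun _ => norm_nonneg _) h <|
    (tendsto_pow_atTop_atTop_of_one_lt one_lt_two).const_div_atTop c

lemma tendsto_apply_of_abs_sum_sub_le {α : Type*} {q : ℕ → α → ℚ} {p : α → ℝ} {c : ℝ}
    (h : ∀ i (s : Finset α), |∑ a ∈ s, (q i a : ℝ) - ∑ a ∈ s, p a| ≤ c / 2 ^ i) (a : α) :
    Tendsto (fun i => (q i a : ℝ)) atTop (𝓝 (p a)) :=
  tendsto_of_abs_sub_le_div_two_pow fun i => by simpa using h i {a}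

lemma exists_rat_antitone_tendsto (x : ℝ) (c : ℕ) :
    ∃ e : ℕ → ℚ, (∀ i, x + c / 2 ^ i ≤ e i) ∧ Antitone (fun i => (e i : ℝ)) ∧
      Tendsto (fun i => (e i : ℝ)) atTop (𝓝 x) := by
  refine ⟨fun i => dyadicCeil x i + c / 2 ^ i, fun i => ?_, ?_, ?_⟩
  · push_cast
    linarith [le_dyadicCeil x i]
  · refine antitone_nat_of_succ_le fun i => ?_
    have hc : (c : ℝ) / 2 ^ (i + 1) ≤ c / 2 ^ i :=
      div_le_div_of_nonneg_left (by positivity) (by positivity)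
        (pow_le_pow_right₀ one_le_two i.le_succ)
    push_cast
    have hd : (dyadicCeil x (i + 1) : ℝ) ≤ dyadicCeil x i := by
      exact_mod_cast dyadicCeil_succ_le x i
    linarith
  · refine tendsto_of_abs_sub_le_div_two_pow (c := c + 1) fun i => ?_
    have h₁ := le_dyadicCeil x i
    have h₂ := dyadicCeil_le x i
    have hc : (0 : ℝ) ≤ c / 2 ^ i := by positivity
    push_cast
    rw [abs_le, add_div]
    constructor <;> linarith [show (0 : ℝ) ≤ 1 / 2 ^ i by positivity]

section ProbApprox

variable {α : Type*} [Fintype α] {p : α → ℝ}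

def dyadicDeficit (p : α → ℝ) (i : ℕ) : ℚ := 1 - ∑ a, dyadicFloor (p a) i

lemma dyadicDeficit_nonneg (hp1 : ∑ a, p a = 1) (i : ℕ) : 0 ≤ dyadicDeficit p i := by
  have : ∑ a, (dyadicFloor (p a) i : ℝ) ≤ 1 := hp1 ▸ sum_le_sum fun a _ => dyadicFloor_le (p a) i
  rw [dyadicDeficit, sub_nonneg]
  exact_mod_cast this

lemma dyadicDeficit_le (hp1 : ∑ a, p a = 1) (i : ℕ) :
    (dyadicDeficit p i : ℝ) ≤ Fintype.card α / 2 ^ i := by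
  have := sum_le_sum fun a (_ : a ∈ univ) => sub_le_dyadicFloor (p a) i
  rw [sum_sub_distrib, hp1, sum_const, card_univ, nsmul_eq_mul, mul_one_div] at this
  rw [dyadicDeficit]
  push_cast
  linarith

variable [DecidableEq α]

def dyadicProbApprox (p : α → ℝ) (a₀ : α) (i : ℕ) (a : α) : ℚ :=
  dyadicFloor (p a) i + (Pi.single a₀ (dyadicDeficit p i) : α → ℚ) a

lemma sum_dyadicProbApprox (p : α → ℝ) (a₀ : α) (i : ℕ) (s : Finset α) :
    ∑ a ∈ s, dyadicProbApprox p a₀ i a =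
      ∑ a ∈ s, dyadicFloor (p a) i + if a₀ ∈ s then dyadicDeficit p i else 0 := by
  rw [← sum_pi_single', ← sum_add_distrib]
  rfl

lemma sum_univ_dyadicProbApprox (p : α → ℝ) (a₀ : α) (i : ℕ) :
    ∑ a, dyadicProbApprox p a₀ i a = 1 := by
  rw [sum_dyadicProbApprox, if_pos (mem_univ a₀), dyadicDeficit, add_sub_cancel]

lemma dyadicProbApprox_nonneg (hp0 : ∀ a, 0 ≤ p a) (hp1 : ∑ a, p a = 1) (a₀ : α) (i : ℕ)
    (a : α) : 0 ≤ dyadicProbApprox p a₀ i a := by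
  unfold dyadicProbApprox
  have := dyadicFloor_nonneg i (hp0 a)
  rcases eq_or_ne a a₀ with rfl | ha
  · simpa using add_nonneg this (dyadicDeficit_nonneg hp1 i)
  · simpa [ha] using this

lemma abs_sum_dyadicProbApprox_sub_le (hp1 : ∑ a, p a = 1) (a₀ : α) (i : ℕ) (s : Finset α) :
    |∑ a ∈ s, (dyadicProbApprox p a₀ i a : ℝ) - ∑ a ∈ s, p a| ≤ Fintype.card α / 2 ^ i := by
  have hdef₀ : (0 : ℝ) ≤ dyadicDeficit p i := by exact_mod_cast dyadicDeficit_nonneg hp1 i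
  have hdef := dyadicDeficit_le hp1 i
  have hfloor : ∑ a ∈ s, (dyadicFloor (p a) i : ℝ) ≤ ∑ a ∈ s, p a :=
    sum_le_sum fun a _ => dyadicFloor_le (p a) i
  have hsub : ∑ a ∈ s, p a - Fintype.card α / 2 ^ i ≤ ∑ a ∈ s, (dyadicFloor (p a) i : ℝ) := by
    have := sum_le_sum fun a (_ : a ∈ s) => sub_le_dyadicFloor (p a) i
    rw [sum_sub_distrib, sum_const, nsmul_eq_mul, mul_one_div] at this
    have hcard : (s.card : ℝ) / 2 ^ i ≤ Fintype.card α / 2 ^ i := by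
      gcongr
      exact_mod_cast card_le_univ s
    linarith
  rw [← Rat.cast_sum, sum_dyadicProbApprox, abs_le]
  push_cast
  split_ifs <;> constructor <;> linarith

theorem exists_rat_prob_approx (hp0 : ∀ a, 0 ≤ p a) (hp1 : ∑ a, p a = 1) :
    ∃ q : ℕ → α → ℚ, (∀ i, (∀ a, 0 ≤ q i a) ∧ ∑ a, q i a = 1) ∧
      ∀ i (s : Finset α), |∑ a ∈ s, (q i a : ℝ) - ∑ a ∈ s, p a| ≤ Fintype.card α / 2 ^ i := by
  obtain ⟨a₀⟩ : Nonempty α :=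
    univ_nonempty_iff.1 (nonempty_of_sum_ne_zero (hp1 ▸ one_ne_zero))
  exact ⟨dyadicProbApprox p a₀, fun i => ⟨dyadicProbApprox_nonneg hp0 hp1 a₀ i,
    sum_univ_dyadicProbApprox p a₀ i⟩, abs_sum_dyadicProbApprox_sub_le hp1 a₀⟩

end ProbApprox

end

theorem stmt15_general {A B : Type*} [Fintype A] [Fintype B]
    (R : A → B → Prop) (P : A → ℝ) (P' : B → ℝ) (ε : ℝ)
    (hP0 : ∀ a, 0 ≤ P a) (hP1 : ∑ a, P a = 1)
    (hP'0 : ∀ b, 0 ≤ P' b) (hP'1 : ∑ b, P' b = 1)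
    (hall : ∀ U : Finset A, ∑ a ∈ U, P a ≤
      (∑ b ∈ univ.filter (fun b => ∃ a ∈ U, R a b), P' b) + ε) :
    ∃ (Pq : ℕ → A → ℚ) (P'q : ℕ → B → ℚ) (εq : ℕ → ℚ),
      (∀ i, (∀ a, 0 ≤ Pq i a) ∧ ∑ a, Pq i a = 1) ∧
      (∀ i, (∀ b, 0 ≤ P'q i b) ∧ ∑ b, P'q i b = 1) ∧
      (∀ i, ε ≤ (εq i : ℝ)) ∧ (Antitone fun i => (εq i : ℝ)) ∧
      Filter.Tendsto (fun i => (εq i : ℝ)) Filter.atTop (nhds ε) ∧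
      (∀ a, Filter.Tendsto (fun i => ((Pq i a : ℝ))) Filter.atTop (nhds (P a))) ∧
      (∀ b, Filter.Tendsto (fun i => ((P'q i b : ℝ))) Filter.atTop (nhds (P' b))) ∧
      ∀ i (U : Finset A), ∑ a ∈ U, Pq i a ≤
        (∑ b ∈ univ.filter (fun b => ∃ a ∈ U, R a b), P'q i b) + εq i := by
  obtain ⟨Pq, hPq, hPq_near⟩ := exists_rat_prob_approx hP0 hP1
  obtain ⟨P'q, hP'q, hP'q_near⟩ := exists_rat_prob_approx hP'0 hP'1
  obtain ⟨εq, hεq_ge, hεq_anti, hεq_lim⟩ :=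
    exists_rat_antitone_tendsto ε (Fintype.card A + Fintype.card B)
  refine ⟨Pq, P'q, εq, hPq, hP'q,
    fun i => (le_add_of_nonneg_right (by positivity)).trans (hεq_ge i), hεq_anti, hεq_lim,
    tendsto_apply_of_abs_sum_sub_le hPq_near, tendsto_apply_of_abs_sum_sub_le hP'q_near,
    fun i U => ?_⟩
  set N := univ.filter fun b => ∃ a ∈ U, R a b
  have hP := (abs_sub_le_iff.1 (hPq_near i U)).1
  have hP' := (abs_sub_le_iff.1 (hP'q_near i N)).2
  have hε := hεq_ge i
  push_cast [add_div] at hε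
  exact_mod_cast (by linarith [hall U] : ∑ a ∈ U, (Pq i a : ℝ) ≤ ∑ b ∈ N, (P'q i b : ℝ) + εq i)

/-- Rational approximation of the deficiency coupling condition. -/
theorem stmt15 {A B : Type*} [Fintype A] [Fintype B]
    (R : A → B → Prop) (P : A → ℝ) (P' : B → ℝ) (ε : ℝ) (hε : 0 ≤ ε)
    (hP0 : ∀ a, 0 ≤ P a) (hP1 : ∑ a, P a = 1)
    (hP'0 : ∀ b, 0 ≤ P' b) (hP'1 : ∑ b, P' b = 1)
    (hall : ∀ U : Finset A, ∑ a ∈ U, P a ≤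
      (∑ b ∈ univ.filter (fun b => ∃ a ∈ U, R a b), P' b) + ε) :
    ∃ (Pq : ℕ → A → ℚ) (P'q : ℕ → B → ℚ) (εq : ℕ → ℚ),
      (∀ i, (∀ a, 0 ≤ Pq i a) ∧ ∑ a, Pq i a = 1) ∧
      (∀ i, (∀ b, 0 ≤ P'q i b) ∧ ∑ b, P'q i b = 1) ∧
      (∀ i, ε ≤ (εq i : ℝ)) ∧ (Antitone fun i => (εq i : ℝ)) ∧
      Filter.Tendsto (fun i => (εq i : ℝ)) Filter.atTop (nhds ε) ∧
      (∀ a, Filter.Tendsto (fun i => ((Pq i a : ℝ))) Filter.atTop (nhds (P a))) ∧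
      (∀ b, Filter.Tendsto (fun i => ((P'q i b : ℝ))) Filter.atTop (nhds (P' b))) ∧
      ∀ i (U : Finset A), ∑ a ∈ U, Pq i a ≤
        (∑ b ∈ univ.filter (fun b => ∃ a ∈ U, R a b), P'q i b) + εq i :=
  stmt15_general R P P' ε hP0 hP1 hP'0 hP'1 hall
end
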